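/- arXiv:0906.2753 — 9 statements merged into one kernel-verified Lean document; each statement's English description precedes it below -/
import Mathlib

section
/- Given real numbers s1, s2, b1, b2 and a1 < a2, let s = (b2 - b1)/(a2 - a1), L(x) = b1 + s(x - a1), and M = max(|s1 - s|, |s2 - s|). Then there exists a cubic polynomial f with f(a1) = b1, f(a2) = b2, f'(a1) = s1, f'(a2) = s2, such that for all x in [a1, a2]: |f'(x) - s| ≤ 3M and |f(x) - L(x)| ≤ 2M(a2 - a1). -/
/-!
Perturb the secant line `L` by the two cubic bubbles `(x - a₁)² (x - a₂)` and
`(x - a₁) (x - a₂)²`: both vanish at `a₁` and `a₂`, and each has nonzero derivative at only one of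
the endpoints, so their coefficients `βᵢ = (sᵢ - s) / (a₂ - a₁)²` can be chosen independently to
match the slopes. On `[a₁, a₂]` the bubbles are bounded by `(a₂ - a₁)³` and their derivatives by
`(a₂ - a₁)²`, which gives the two estimates with constant `|s₁ - s| + |s₂ - s| ≤ 2M`.
-/

open Polynomial Set

namespace Polynomial

section CommRing

variable {R : Type*} [CommRing R]

noncomputable def hermiteCubic (a₁ a₂ b₁ s β₁ β₂ : R) : R[X] :=
  C b₁ + C s * (X - C a₁) + C β₂ * (X - C a₁) ^ 2 * (X - C a₂) +
    C β₁ * (X - C a₁) * (X - C a₂) ^ 2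

variable (a₁ a₂ b₁ s β₁ β₂ : R)

theorem degree_hermiteCubic_le : (hermiteCubic a₁ a₂ b₁ s β₁ β₂).degree ≤ 3 := by
  unfold hermiteCubic
  compute_degree!

theorem eval_hermiteCubic (x : R) :
    (hermiteCubic a₁ a₂ b₁ s β₁ β₂).eval x =
      b₁ + s * (x - a₁) + β₂ * (x - a₁) ^ 2 * (x - a₂) + β₁ * (x - a₁) * (x - a₂) ^ 2 := by
  simp [hermiteCubic]

theorem eval_derivative_hermiteCubic (x : R) :
    (derivative (hermiteCubic a₁ a₂ b₁ s β₁ β₂)).eval x =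
      s + β₂ * ((x - a₁) ^ 2 + 2 * (x - a₁) * (x - a₂)) +
        β₁ * ((x - a₂) ^ 2 + 2 * (x - a₁) * (x - a₂)) := by
  simp only [hermiteCubic, derivative_add, derivative_C, derivative_mul, zero_mul, derivative_sub,
    derivative_X, sub_zero, mul_one, zero_add, derivative_pow, Nat.cast_ofNat, Nat.add_one_sub_one,
    pow_one, eval_add, eval_C, eval_mul, eval_sub, eval_X, eval_pow]
  ring

theorem eval_hermiteCubic_left : (hermiteCubic a₁ a₂ b₁ s β₁ β₂).eval a₁ = b₁ := by
  simp [eval_hermiteCubic]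

theorem eval_hermiteCubic_right :
    (hermiteCubic a₁ a₂ b₁ s β₁ β₂).eval a₂ = b₁ + s * (a₂ - a₁) := by
  simp [eval_hermiteCubic]

theorem eval_derivative_hermiteCubic_left :
    (derivative (hermiteCubic a₁ a₂ b₁ s β₁ β₂)).eval a₁ = s + β₁ * (a₂ - a₁) ^ 2 := by
  rw [eval_derivative_hermiteCubic]
  ring

theorem eval_derivative_hermiteCubic_right :
    (derivative (hermiteCubic a₁ a₂ b₁ s β₁ β₂)).eval a₂ = s + β₂ * (a₂ - a₁) ^ 2 := by
  rw [eval_derivative_hermiteCubic]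
  ring

end CommRing

theorem abs_sq_add_two_mul_le {u v : ℝ} (hu : 0 ≤ u) (hv : v ≤ 0) :
    |u ^ 2 + 2 * u * v| ≤ (u - v) ^ 2 := by
  have huv : u * v ≤ 0 := mul_nonpos_of_nonneg_of_nonpos hu hv
  rw [abs_le]
  constructor <;> nlinarith [sq_nonneg u, sq_nonneg v]

theorem abs_sq_mul_le {u v : ℝ} (hu : 0 ≤ u) (hv : v ≤ 0) : |u ^ 2 * v| ≤ (u - v) ^ 3 := by
  rw [abs_of_nonpos (mul_nonpos_of_nonneg_of_nonpos (sq_nonneg u) hv)]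
  nlinarith [mul_nonneg (mul_nonneg hu hu) (neg_nonneg.2 hv),
    mul_nonneg (mul_nonneg hu (neg_nonneg.2 hv)) (neg_nonneg.2 hv),
    pow_nonneg (neg_nonneg.2 hv) 3]

variable {a₁ a₂ x : ℝ}

theorem abs_eval_derivative_hermiteCubic_sub_le (hx : x ∈ Icc a₁ a₂) (b₁ s β₁ β₂ : ℝ) :
    |(derivative (hermiteCubic a₁ a₂ b₁ s β₁ β₂)).eval x - s| ≤
      (|β₁| + |β₂|) * (a₂ - a₁) ^ 2 := by
  have hu : 0 ≤ x - a₁ := sub_nonneg.2 hx.1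
  have hv : x - a₂ ≤ 0 := sub_nonpos.2 hx.2
  have h₂ : |(x - a₁) ^ 2 + 2 * (x - a₁) * (x - a₂)| ≤ (a₂ - a₁) ^ 2 := by
    convert abs_sq_add_two_mul_le hu hv using 2; ring
  have h₁ : |(x - a₂) ^ 2 + 2 * (x - a₁) * (x - a₂)| ≤ (a₂ - a₁) ^ 2 := by
    convert abs_sq_add_two_mul_le (neg_nonneg.2 hv) (neg_nonpos.2 hu) using 2 <;> ring
  rw [eval_derivative_hermiteCubic, add_assoc, add_sub_cancel_left]
  calc _ ≤ |β₂| * |(x - a₁) ^ 2 + 2 * (x - a₁) * (x - a₂)| +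
          |β₁| * |(x - a₂) ^ 2 + 2 * (x - a₁) * (x - a₂)| := by
        rw [← abs_mul, ← abs_mul]
        exact abs_add_le _ _
    _ ≤ |β₂| * (a₂ - a₁) ^ 2 + |β₁| * (a₂ - a₁) ^ 2 := by gcongr
    _ = (|β₁| + |β₂|) * (a₂ - a₁) ^ 2 := by ring

theorem abs_eval_hermiteCubic_sub_le (hx : x ∈ Icc a₁ a₂) (b₁ s β₁ β₂ : ℝ) :
    |(hermiteCubic a₁ a₂ b₁ s β₁ β₂).eval x - (b₁ + s * (x - a₁))| ≤
      (|β₁| + |β₂|) * (a₂ - a₁) ^ 3 := by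
  have hu : 0 ≤ x - a₁ := sub_nonneg.2 hx.1
  have hv : x - a₂ ≤ 0 := sub_nonpos.2 hx.2
  have h₂ : |(x - a₁) ^ 2 * (x - a₂)| ≤ (a₂ - a₁) ^ 3 := by
    convert abs_sq_mul_le hu hv using 2; ring
  have h₁ : |(x - a₁) * (x - a₂) ^ 2| ≤ (a₂ - a₁) ^ 3 := by
    rw [← abs_neg]
    convert abs_sq_mul_le (neg_nonneg.2 hv) (neg_nonpos.2 hu) using 2 <;> ring
  rw [eval_hermiteCubic, add_assoc, add_sub_cancel_left, mul_assoc, mul_assoc β₁]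
  calc _ ≤ |β₂| * |(x - a₁) ^ 2 * (x - a₂)| + |β₁| * |(x - a₁) * (x - a₂) ^ 2| := by
        rw [← abs_mul, ← abs_mul]
        exact abs_add_le _ _
    _ ≤ |β₂| * (a₂ - a₁) ^ 3 + |β₁| * (a₂ - a₁) ^ 3 := by gcongr
    _ = (|β₁| + |β₂|) * (a₂ - a₁) ^ 3 := by ring

end Polynomial

theorem stmt_0 (s1 s2 b1 b2 a1 a2 : ℝ) (hlt : a1 < a2) :
    ∃ f : Polynomial ℝ, f.degree ≤ 3 ∧
      f.eval a1 = b1 ∧ f.eval a2 = b2 ∧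
      f.derivative.eval a1 = s1 ∧ f.derivative.eval a2 = s2 ∧
      ∀ x ∈ Set.Icc a1 a2,
        |f.derivative.eval x - (b2 - b1) / (a2 - a1)| ≤
          3 * max |s1 - (b2 - b1) / (a2 - a1)| |s2 - (b2 - b1) / (a2 - a1)| ∧
        |f.eval x - (b1 + (b2 - b1) / (a2 - a1) * (x - a1))| ≤
          2 * max |s1 - (b2 - b1) / (a2 - a1)| |s2 - (b2 - b1) / (a2 - a1)| * (a2 - a1) := by
  set h := a2 - a1 with hh
  set s := (b2 - b1) / h
  set M := max |s1 - s| |s2 - s|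
  have hpos : 0 < h := sub_pos.2 hlt
  have hβ : |(s1 - s) / h ^ 2| + |(s2 - s) / h ^ 2| ≤ 2 * M / h ^ 2 := by
    rw [abs_div, abs_div, abs_of_pos (pow_pos hpos 2), ← add_div]
    gcongr
    linarith [le_max_left |s1 - s| |s2 - s|, le_max_right |s1 - s| |s2 - s|]
  have hM : 0 ≤ M := (abs_nonneg _).trans (le_max_left _ _)
  refine ⟨hermiteCubic a1 a2 b1 s ((s1 - s) / h ^ 2) ((s2 - s) / h ^ 2),
    degree_hermiteCubic_le .., eval_hermiteCubic_left .., ?_, ?_, ?_, fun x hx => ⟨?_, ?_⟩⟩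
  · rw [eval_hermiteCubic_right, ← hh, div_mul_cancel₀ _ hpos.ne']
    ring
  · rw [eval_derivative_hermiteCubic_left, ← hh, div_mul_cancel₀ _ (pow_pos hpos 2).ne']
    ring
  · rw [eval_derivative_hermiteCubic_right, ← hh, div_mul_cancel₀ _ (pow_pos hpos 2).ne']
    ring
  · calc _ ≤ _ := abs_eval_derivative_hermiteCubic_sub_le hx ..
      _ ≤ 2 * M / h ^ 2 * h ^ 2 := by gcongr
      _ ≤ 3 * M := by rw [div_mul_cancel₀ _ (pow_pos hpos 2).ne']; linarith
  · calc _ ≤ _ := abs_eval_hermiteCubic_sub_le hx ..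
      _ ≤ 2 * M / h ^ 2 * h ^ 3 := by gcongr
      _ = 2 * M * h := by field_simp
end

section
/- Let D ⊆ ℝ be closed and f, h : D → ℝ continuous with f' = h in the strong sense. Then there exist continuous functions F, H : ℝ → ℝ with F extending f, H extending h, and F differentiable everywhere with F' = H. -/
/-!
Away from `D` the derivative `h` is extended by constants on the two unbounded components of
`ℝ \ D` and, on each bounded gap `(a, b)`, by the quadratic that matches `h` at `a` and `b` and
has mean value `(f b - f a) / (b - a)`. The strong derivative makes all three data close to
`h x` near `x ∈ D`, so the extension `H` is continuous, and its primitive `F` through `f x₀`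
satisfies `F' = H`. On `D`, `F - f` has derivative `0` relative to `D` and takes equal values at
the ends of every gap; composing it with a nearest-point retraction onto `D` gives a function
with zero derivative everywhere, so `F - f` is constant on `D`.
-/

open Set Filter Topology Asymptotics

/-- `f' = h` in the strong sense on `D`. -/
def StrongDerivOn (D : Set ℝ) (f h : ℝ → ℝ) : Prop :=
  ∀ x ∈ D, ∀ ε > 0, ∃ δ > 0, ∀ x1 ∈ D, ∀ x2 ∈ D, x1 ≠ x2 →
    |x1 - x| < δ → |x2 - x| < δ → |(f x2 - f x1) / (x2 - x1) - h x| < ε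

structure IsGap (D : Set ℝ) (a b : ℝ) : Prop where
  left_mem : a ∈ D
  right_mem : b ∈ D
  lt : a < b
  notMem : ∀ z ∈ Ioo a b, z ∉ D

namespace IsGap

variable {D : Set ℝ} {a b t z : ℝ}

lemma le_left (hg : IsGap D a b) (ht : t < b) (hz : z ∈ D) (hzt : z ≤ t) : z ≤ a :=
  not_lt.1 fun haz => hg.notMem z ⟨haz, hzt.trans_lt ht⟩ hz

lemma right_le (hg : IsGap D a b) (ht : a < t) (hz : z ∈ D) (htz : t ≤ z) : b ≤ z :=
  not_lt.1 fun hzb => hg.notMem z ⟨ht.trans_le htz, hzb⟩ hz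

lemma csSup_inter_Iic (hg : IsGap D a b) (ht : t ∈ Ioo a b) : sSup (D ∩ Iic t) = a :=
  IsGreatest.csSup_eq ⟨⟨hg.left_mem, ht.1.le⟩, fun _ hz => hg.le_left ht.2 hz.1 hz.2⟩

lemma csInf_inter_Ici (hg : IsGap D a b) (ht : t ∈ Ioo a b) : sInf (D ∩ Ici t) = b :=
  IsLeast.csInf_eq ⟨⟨hg.right_mem, ht.2.le⟩, fun _ hz => hg.right_le ht.1 hz.1 hz.2⟩

end IsGap

namespace IsClosed

variable {D : Set ℝ} {t x δ : ℝ}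

lemma isGap_or_isGreatest_or_isLeast (hD : IsClosed D) (hne : D.Nonempty) (ht : t ∉ D) :
    (∃ a b, IsGap D a b ∧ t ∈ Ioo a b) ∨ (∃ a, IsGreatest D a ∧ a < t) ∨
      ∃ b, IsLeast D b ∧ t < b := by
  by_cases hB : (D ∩ Ici t).Nonempty
  · by_cases hA : (D ∩ Iic t).Nonempty
    · have hbddA : BddAbove (D ∩ Iic t) := ⟨t, fun _ hz => hz.2⟩
      have hbddB : BddBelow (D ∩ Ici t) := ⟨t, fun _ hz => hz.2⟩
      obtain ⟨haD, hat⟩ := (hD.inter isClosed_Iic).csSup_mem hA hbddA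
      obtain ⟨hbD, hbt⟩ := (hD.inter isClosed_Ici).csInf_mem hB hbddB
      have hat' : sSup (D ∩ Iic t) < t := lt_of_le_of_ne hat fun h => ht (h ▸ haD)
      have htb : t < sInf (D ∩ Ici t) := lt_of_le_of_ne hbt fun h => ht (h ▸ hbD)
      refine Or.inl ⟨_, _, ⟨haD, hbD, hat'.trans htb, fun z hz hzD => ?_⟩, hat', htb⟩
      rcases le_total z t with hzt | htz
      · exact (le_csSup hbddA ⟨hzD, hzt⟩).not_gt hz.1
      · exact (csInf_le hbddB ⟨hzD, htz⟩).not_gt hz.2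
    · have hlt : ∀ z ∈ D, t < z := fun z hz => not_le.1 fun hzt => hA ⟨z, hz, hzt⟩
      have hleast := hD.isLeast_csInf hne ⟨t, fun z hz => (hlt z hz).le⟩
      exact Or.inr (Or.inr ⟨_, hleast, hlt _ hleast.1⟩)
  · have hlt : ∀ z ∈ D, z < t := fun z hz => not_le.1 fun htz => hB ⟨z, hz, htz⟩
    have hgreatest := hD.isGreatest_csSup hne ⟨t, fun z hz => (hlt z hz).le⟩
    exact Or.inr (Or.inl ⟨_, hgreatest, hlt _ hgreatest.1⟩)

lemma inter_Ioo_right_nonempty (hD : IsClosed D) (hx : x ∈ D) (hgap : ¬∃ b, IsGap D x b)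
    (hmax : ¬IsGreatest D x) (hδ : 0 < δ) : (D ∩ Ioo x (x + δ)).Nonempty := by
  by_contra hempty
  have hfree : ∀ z ∈ D, z < x + δ → z ≤ x := fun z hz hzδ =>
    not_lt.1 fun hxz => hempty ⟨z, hz, hxz, hzδ⟩
  have htD : x + δ / 2 ∉ D := fun h => (hfree _ h (by linarith)).not_gt (by linarith)
  rcases hD.isGap_or_isGreatest_or_isLeast ⟨x, hx⟩ htD
    with ⟨a, b, hg, ht⟩ | ⟨a, ha, hat⟩ | ⟨b, hb, htb⟩
  · have hax : a = x := le_antisymm (hfree a hg.left_mem (by linarith [ht.1]))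
      (hg.le_left ht.2 hx (by linarith))
    exact hgap ⟨b, hax ▸ hg⟩
  · have hax : a = x := le_antisymm (hfree a ha.1 (by linarith)) (ha.2 hx)
    exact hmax (hax ▸ ha)
  · linarith [hb.2 hx]

lemma inter_Ioo_left_nonempty (hD : IsClosed D) (hx : x ∈ D) (hgap : ¬∃ a, IsGap D a x)
    (hmin : ¬IsLeast D x) (hδ : 0 < δ) : (D ∩ Ioo (x - δ) x).Nonempty := by
  by_contra hempty
  have hfree : ∀ z ∈ D, x - δ < z → x ≤ z := fun z hz hzδ =>
    not_lt.1 fun hzx => hempty ⟨z, hz, hzδ, hzx⟩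
  have htD : x - δ / 2 ∉ D := fun h => (hfree _ h (by linarith)).not_gt (by linarith)
  rcases hD.isGap_or_isGreatest_or_isLeast ⟨x, hx⟩ htD
    with ⟨a, b, hg, ht⟩ | ⟨a, ha, hat⟩ | ⟨b, hb, htb⟩
  · have hbx : b = x := le_antisymm (hg.right_le ht.1 hx (by linarith))
      (hfree b hg.right_mem (by linarith [ht.2]))
    exact hgap ⟨a, hbx ▸ hg⟩
  · linarith [ha.2 hx]
  · have hbx : b = x := le_antisymm (hb.2 hx) (hfree b hb.1 (by linarith))
    exact hmin (hbx ▸ hb)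

end IsClosed

section Bridge

variable {u v m s η : ℝ}

/-- The quadratic with values `u`, `v` at `0`, `1` and mean value `m` over `[0, 1]`. -/
noncomputable def bridge (u v m s : ℝ) : ℝ :=
  u * (1 - s) + v * s + 6 * (m - (u + v) / 2) * (s * (1 - s))

lemma bridge_zero : bridge u v m 0 = u := by simp [bridge]

lemma bridge_one : bridge u v m 1 = v := by simp [bridge]

lemma bridge_sub (c : ℝ) : bridge u v m s - c = bridge (u - c) (v - c) (m - c) s := by
  unfold bridge; ring

lemma abs_bridge_le (hs : s ∈ Icc 0 1) (hu : |u| ≤ η) (hv : |v| ≤ η) (hm : |m| ≤ η) :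
    |bridge u v m s| ≤ 4 * η := by
  obtain ⟨hs0, hs1⟩ := hs
  rw [abs_le] at hu hv hm ⊢
  have hss : 0 ≤ s * (1 - s) := mul_nonneg hs0 (by linarith)
  have hss4 : s * (1 - s) ≤ 1 / 4 := by nlinarith [sq_nonneg (s - 1 / 2)]
  unfold bridge
  constructor <;> nlinarith [mul_nonneg (sub_nonneg.2 hu.2) (sub_nonneg.2 hs1),
    mul_nonneg (neg_le_iff_add_nonneg.1 hu.1) (sub_nonneg.2 hs1),
    mul_nonneg (sub_nonneg.2 hv.2) hs0, mul_nonneg (neg_le_iff_add_nonneg.1 hv.1) hs0,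
    mul_nonneg (sub_nonneg.2 hm.2) hss, mul_nonneg (neg_le_iff_add_nonneg.1 hm.1) hss]

lemma integral_bridge : ∫ s in (0 : ℝ)..1, bridge u v m s = m := by
  have hint : ∀ p : ℝ → ℝ, Continuous p → IntervalIntegrable p MeasureTheory.volume 0 1 :=
    fun p hp => hp.intervalIntegrable _ _
  have hpoly : (fun s => bridge u v m s) = fun s =>
      u + s * (v - u + 6 * (m - (u + v) / 2)) - s ^ 2 * (6 * (m - (u + v) / 2)) := by
    ext s; unfold bridge; ring
  rw [hpoly, intervalIntegral.integral_sub (hint _ (by fun_prop)) (hint _ (by fun_prop)),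
    intervalIntegral.integral_add (hint _ (by fun_prop)) (hint _ (by fun_prop))]
  simp only [intervalIntegral.integral_mul_const, integral_id, integral_pow,
    intervalIntegral.integral_const]
  norm_num
  ring

end Bridge

section GapFun

variable {f h : ℝ → ℝ} {a b t c η : ℝ}

noncomputable def gapFun (f h : ℝ → ℝ) (a b t : ℝ) : ℝ :=
  bridge (h a) (h b) ((f b - f a) / (b - a)) ((t - a) / (b - a))

lemma gapFun_left : gapFun f h a b a = h a := by simp [gapFun, bridge_zero]

lemma gapFun_right (hab : a < b) : gapFun f h a b b = h b := by
  rw [gapFun, div_self (sub_ne_zero.2 hab.ne'), bridge_one]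

lemma continuous_gapFun : Continuous (gapFun f h a b) := by
  unfold gapFun bridge; fun_prop

lemma abs_gapFun_sub_le (hab : a < b) (ht : t ∈ Icc a b) (ha : |h a - c| ≤ η)
    (hb : |h b - c| ≤ η) (hslope : |(f b - f a) / (b - a) - c| ≤ η) :
    |gapFun f h a b t - c| ≤ 4 * η := by
  have hs : (t - a) / (b - a) ∈ Icc (0 : ℝ) 1 :=
    ⟨div_nonneg (by linarith [ht.1]) (by linarith),
      (div_le_one (by linarith)).2 (by linarith [ht.2])⟩
  rw [gapFun, bridge_sub]
  exact abs_bridge_le hs ha hb hslope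

lemma integral_gapFun (hab : a < b) : ∫ t in a..b, gapFun f h a b t = f b - f a := by
  have hL : b - a ≠ 0 := sub_ne_zero.2 hab.ne'
  simp only [gapFun]
  rw [intervalIntegral.integral_comp_sub_right
      (fun t => bridge (h a) (h b) ((f b - f a) / (b - a)) (t / (b - a))) a,
    intervalIntegral.integral_comp_div _ hL, sub_self, zero_div, div_self hL, integral_bridge,
    smul_eq_mul, mul_div_cancel₀ _ hL]

end GapFun

section GapExt

variable {D : Set ℝ} {f h : ℝ → ℝ} {a b t x ε : ℝ}

open scoped Classical in
noncomputable def gapExt (D : Set ℝ) (f h : ℝ → ℝ) (t : ℝ) : ℝ :=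
  if t ∈ D then h t
  else if (D ∩ Iic t).Nonempty ∧ (D ∩ Ici t).Nonempty then
    gapFun f h (sSup (D ∩ Iic t)) (sInf (D ∩ Ici t)) t
  else if (D ∩ Iic t).Nonempty then h (sSup D)
  else h (sInf D)

lemma gapExt_of_mem (ht : t ∈ D) : gapExt D f h t = h t := by
  rw [gapExt, if_pos ht]

lemma IsGap.gapExt_eq (hg : IsGap D a b) (ht : t ∈ Ioo a b) :
    gapExt D f h t = gapFun f h a b t := by
  rw [gapExt, if_neg (hg.notMem t ht),
    if_pos ⟨⟨a, hg.left_mem, ht.1.le⟩, ⟨b, hg.right_mem, ht.2.le⟩⟩,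
    hg.csSup_inter_Iic ht, hg.csInf_inter_Ici ht]

lemma IsGap.eqOn_gapExt (hg : IsGap D a b) : EqOn (gapExt D f h) (gapFun f h a b) (Icc a b) := by
  intro t ⟨hat, htb⟩
  rcases hat.eq_or_lt with rfl | hat
  · rw [gapExt_of_mem hg.left_mem, gapFun_left]
  rcases htb.eq_or_lt with rfl | htb
  · rw [gapExt_of_mem hg.right_mem, gapFun_right hg.lt]
  exact hg.gapExt_eq ⟨hat, htb⟩

lemma IsGap.integral_gapExt (hg : IsGap D a b) : ∫ t in a..b, gapExt D f h t = f b - f a := by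
  rw [intervalIntegral.integral_congr (uIcc_of_le hg.lt.le ▸ hg.eqOn_gapExt),
    integral_gapFun hg.lt]

lemma IsGreatest.gapExt_eq (ha : IsGreatest D a) (hat : a < t) : gapExt D f h t = h a := by
  have hnot : ¬(D ∩ Ici t).Nonempty := fun ⟨z, hz, htz⟩ =>
    (ha.2 hz).not_gt (hat.trans_le htz)
  rw [gapExt, if_neg fun htD => (ha.2 htD).not_gt hat, if_neg fun hA => hnot hA.2,
    if_pos ⟨a, ha.1, hat.le⟩, ha.csSup_eq]

lemma IsLeast.gapExt_eq (hb : IsLeast D b) (htb : t < b) : gapExt D f h t = h b := by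
  have hnot : ¬(D ∩ Iic t).Nonempty := fun ⟨z, hz, hzt⟩ =>
    (hb.2 hz).not_gt (hzt.trans_lt htb)
  rw [gapExt, if_neg fun htD => (hb.2 htD).not_gt htb, if_neg fun hA => hnot hA.1, if_neg hnot,
    hb.csInf_eq]

lemma StrongDerivOn.exists_abs_gapExt_sub_le (hfh : StrongDerivOn D f h) (hD : IsClosed D)
    (hh : ContinuousOn h D) (hx : x ∈ D) (hε : 0 < ε) :
    ∃ δ > 0, ∀ p ∈ D, ∀ q ∈ D, |p - x| < δ → |q - x| < δ →
      ∀ t ∈ Icc p q, |gapExt D f h t - h x| ≤ ε := by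
  obtain ⟨δ₁, hδ₁, hcont⟩ :=
    Metric.continuousWithinAt_iff.1 (hh x hx) (ε / 4) (by positivity)
  obtain ⟨δ₂, hδ₂, hslope⟩ := hfh x hx (ε / 4) (by positivity)
  refine ⟨min δ₁ δ₂, lt_min hδ₁ hδ₂, fun p hp q hq hpx hqx t ht => ?_⟩
  have hnear : ∀ z, p ≤ z → z ≤ q → |z - x| < min δ₁ δ₂ := fun z hpz hzq => by
    rw [abs_sub_lt_iff] at hpx hqx ⊢; constructor <;> linarith
  have hh_near : ∀ z ∈ D, p ≤ z → z ≤ q → |h z - h x| ≤ ε / 4 := fun z hz hpz hzq =>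
    (hcont hz ((hnear z hpz hzq).trans_le (min_le_left _ _))).le
  by_cases htD : t ∈ D
  · rw [gapExt_of_mem htD]
    linarith [hh_near t htD ht.1 ht.2]
  rcases hD.isGap_or_isGreatest_or_isLeast ⟨x, hx⟩ htD
    with ⟨a, b, hg, hab⟩ | ⟨a, ha, hat⟩ | ⟨b, hb, htb⟩
  · have hpa : p ≤ a := hg.le_left hab.2 hp ht.1
    have hbq : b ≤ q := hg.right_le hab.1 hq ht.2
    have hnear_a := hnear a hpa (by linarith [hg.lt])
    have hnear_b := hnear b (by linarith [hg.lt]) hbq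
    rw [hg.gapExt_eq hab]
    have := abs_gapFun_sub_le (f := f) hg.lt ⟨hab.1.le, hab.2.le⟩
      (hh_near a hg.left_mem hpa (by linarith [hg.lt]))
      (hh_near b hg.right_mem (by linarith [hg.lt]) hbq)
      (hslope a hg.left_mem b hg.right_mem hg.lt.ne (hnear_a.trans_le (min_le_right _ _))
        (hnear_b.trans_le (min_le_right _ _))).le
    linarith
  · linarith [ha.2 hq, ht.2]
  · linarith [hb.2 hp, ht.1]

lemma continuousWithinAt_gapExt_Ici (hD : IsClosed D) (hh : ContinuousOn h D)
    (hfh : StrongDerivOn D f h) (hx : x ∈ D) : ContinuousWithinAt (gapExt D f h) (Ici x) x := by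
  by_cases hgap : ∃ b, IsGap D x b
  · obtain ⟨b, hg⟩ := hgap
    refine continuous_gapFun.continuousWithinAt.congr_of_eventuallyEq ?_
      (hg.eqOn_gapExt ⟨le_rfl, hg.lt.le⟩)
    filter_upwards [Ico_mem_nhdsGE hg.lt] with t ht using hg.eqOn_gapExt ⟨ht.1, ht.2.le⟩
  by_cases hmax : IsGreatest D x
  · refine (continuousWithinAt_const (b := h x)).congr_of_eventuallyEq ?_ (gapExt_of_mem hx)
    filter_upwards [self_mem_nhdsWithin] with t ht
    rcases (show x ≤ t from ht).eq_or_lt with rfl | hxt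
    · exact gapExt_of_mem hx
    · exact hmax.gapExt_eq hxt
  rw [Metric.continuousWithinAt_iff]
  intro ε hε
  obtain ⟨δ, hδ, hest⟩ := hfh.exists_abs_gapExt_sub_le hD hh hx (half_pos hε)
  obtain ⟨q, hq, hxq, hqδ⟩ := hD.inter_Ioo_right_nonempty hx hgap hmax hδ
  refine ⟨q - x, sub_pos.2 hxq, fun t (hxt : x ≤ t) htx => ?_⟩
  rw [Real.dist_eq, abs_of_nonneg (sub_nonneg.2 hxt)] at htx
  rw [Real.dist_eq, gapExt_of_mem hx]
  refine (hest x hx q hq (by simpa using hδ) ?_ t ⟨hxt, by linarith⟩).trans_lt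
    (half_lt_self hε)
  rw [abs_of_pos (sub_pos.2 hxq)]; linarith

lemma continuousWithinAt_gapExt_Iic (hD : IsClosed D) (hh : ContinuousOn h D)
    (hfh : StrongDerivOn D f h) (hx : x ∈ D) : ContinuousWithinAt (gapExt D f h) (Iic x) x := by
  by_cases hgap : ∃ a, IsGap D a x
  · obtain ⟨a, hg⟩ := hgap
    refine continuous_gapFun.continuousWithinAt.congr_of_eventuallyEq ?_
      (hg.eqOn_gapExt ⟨hg.lt.le, le_rfl⟩)
    filter_upwards [Ioc_mem_nhdsLE hg.lt] with t ht using hg.eqOn_gapExt ⟨ht.1.le, ht.2⟩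
  by_cases hmin : IsLeast D x
  · refine (continuousWithinAt_const (b := h x)).congr_of_eventuallyEq ?_ (gapExt_of_mem hx)
    filter_upwards [self_mem_nhdsWithin] with t ht
    rcases (show t ≤ x from ht).eq_or_lt with rfl | htx
    · exact gapExt_of_mem hx
    · exact hmin.gapExt_eq htx
  rw [Metric.continuousWithinAt_iff]
  intro ε hε
  obtain ⟨δ, hδ, hest⟩ := hfh.exists_abs_gapExt_sub_le hD hh hx (half_pos hε)
  obtain ⟨p, hp, hpδ, hpx⟩ := hD.inter_Ioo_left_nonempty hx hgap hmin hδ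
  refine ⟨x - p, sub_pos.2 hpx, fun t (htx : t ≤ x) hxt => ?_⟩
  rw [Real.dist_eq, abs_of_nonpos (sub_nonpos.2 htx)] at hxt
  rw [Real.dist_eq, gapExt_of_mem hx]
  refine (hest p hp x hx ?_ (by simpa using hδ) t ⟨by linarith, htx⟩).trans_lt
    (half_lt_self hε)
  rw [abs_of_neg (sub_neg.2 hpx)]; linarith

lemma continuous_gapExt (hD : IsClosed D) (hne : D.Nonempty) (hh : ContinuousOn h D)
    (hfh : StrongDerivOn D f h) : Continuous (gapExt D f h) := by
  refine continuous_iff_continuousAt.2 fun x => ?_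
  by_cases hx : x ∈ D
  · exact continuousAt_iff_continuous_left_right.2
      ⟨continuousWithinAt_gapExt_Iic hD hh hfh hx, continuousWithinAt_gapExt_Ici hD hh hfh hx⟩
  rcases hD.isGap_or_isGreatest_or_isLeast hne hx
    with ⟨a, b, hg, hab⟩ | ⟨a, ha, hax⟩ | ⟨b, hb, hxb⟩
  · refine (continuous_gapFun (f := f) (h := h) (a := a) (b := b)).continuousAt.congr ?_
    filter_upwards [Ioo_mem_nhds hab.1 hab.2] with t ht using (hg.gapExt_eq ht).symm
  · refine (continuousAt_const (y := h a)).congr ?_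
    filter_upwards [Ioi_mem_nhds hax] with t ht using (ha.gapExt_eq ht).symm
  · refine (continuousAt_const (y := h b)).congr ?_
    filter_upwards [Iio_mem_nhds hxb] with t ht using (hb.gapExt_eq ht).symm

end GapExt

section ZeroDeriv

variable {D : Set ℝ} {G r : ℝ → ℝ} {y C : ℝ}

lemma IsClosed.exists_nearest (hD : IsClosed D) (hne : D.Nonempty) :
    ∃ r : ℝ → ℝ, (∀ t, r t ∈ D) ∧ ∀ t, ∀ z ∈ D, |t - r t| ≤ |t - z| := by
  choose r hrD hr using hD.exists_infDist_eq_dist hne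
  refine ⟨r, hrD, fun t z hz => ?_⟩
  simpa only [← Real.dist_eq, ← hr t] using Metric.infDist_le_dist_of_mem hz

lemma HasDerivWithinAt.hasDerivAt_comp_zero (hG : HasDerivWithinAt G 0 D y)
    (hrD : ∀ t, r t ∈ D) (hry : r y = y) (hr : ∀ t, |r t - y| ≤ C * |t - y|) :
    HasDerivAt (G ∘ r) 0 y := by
  have hbig : (fun t => r t - y) =O[𝓝 y] fun t => t - y :=
    IsBigO.of_bound C (Eventually.of_forall fun t => by simpa only [Real.norm_eq_abs] using hr t)
  have hlim : Tendsto r (𝓝 y) (𝓝[D] y) := by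
    refine tendsto_nhdsWithin_iff.2 ⟨?_, Eventually.of_forall hrD⟩
    have := hbig.trans_tendsto (tendsto_sub_nhds_zero_iff.2 tendsto_id)
    simpa using this.add_const y
  rw [hasDerivWithinAt_iff_isLittleO] at hG
  rw [hasDerivAt_iff_isLittleO]
  simpa [hry, Function.comp_def] using (hG.comp_tendsto hlim).trans_isBigO hbig

lemma IsGap.eq_or_eq_of_abs_sub_le {a b t z : ℝ} (hg : IsGap D a b) (ht : t ∈ Ioo a b)
    (hz : z ∈ D) (hza : |t - z| ≤ |t - a|) (hzb : |t - z| ≤ |t - b|) : z = a ∨ z = b := by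
  rw [abs_of_pos (sub_pos.2 ht.1)] at hza
  rw [abs_of_neg (sub_neg.2 ht.2)] at hzb
  obtain ⟨-, hza⟩ := abs_le.1 hza
  obtain ⟨hzb, -⟩ := abs_le.1 hzb
  by_contra! hne
  exact hg.notMem z
    ⟨lt_of_le_of_ne (by linarith) hne.1.symm, lt_of_le_of_ne (by linarith) hne.2⟩ hz

lemma IsGreatest.eq_of_abs_sub_le {a t z : ℝ} (ha : IsGreatest D a) (hat : a < t) (hz : z ∈ D)
    (hza : |t - z| ≤ |t - a|) : z = a := by
  have hz_le := ha.2 hz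
  rw [abs_of_pos (sub_pos.2 hat), abs_of_pos (by linarith)] at hza
  linarith

lemma IsLeast.eq_of_abs_sub_le {b t z : ℝ} (hb : IsLeast D b) (htb : t < b) (hz : z ∈ D)
    (hzb : |t - z| ≤ |t - b|) : z = b := by
  have hle_z := hb.2 hz
  rw [abs_of_neg (sub_neg.2 htb), abs_of_neg (by linarith)] at hzb
  linarith

theorem IsClosed.eq_of_hasDerivWithinAt_zero (hD : IsClosed D)
    (hG : ∀ y ∈ D, HasDerivWithinAt G 0 D y) (hgap : ∀ a b, IsGap D a b → G a = G b)
    {x y : ℝ} (hx : x ∈ D) (hy : y ∈ D) : G x = G y := by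
  obtain ⟨r, hrD, hr⟩ := hD.exists_nearest ⟨x, hx⟩
  have hfix : ∀ z ∈ D, r z = z := fun z hz => by
    simpa [sub_eq_zero, eq_comm] using hr z z hz
  suffices hderiv : ∀ z, HasDerivAt (G ∘ r) 0 z by
    have := is_const_of_deriv_eq_zero (fun z => (hderiv z).differentiableAt)
      (fun z => (hderiv z).deriv) x y
    simpa [hfix x hx, hfix y hy] using this
  intro z
  by_cases hz : z ∈ D
  · refine (hG z hz).hasDerivAt_comp_zero hrD (hfix z hz) (C := 2) fun t => ?_
    calc |r t - z| ≤ |r t - t| + |t - z| := abs_sub_le _ _ _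
      _ = |t - r t| + |t - z| := by rw [abs_sub_comm]
      _ ≤ 2 * |t - z| := by linarith [hr t z hz]
  suffices hconst : ∃ c, G ∘ r =ᶠ[𝓝 z] fun _ => c by
    obtain ⟨c, hc⟩ := hconst
    exact hc.hasDerivAt_iff.2 (hasDerivAt_const z c)
  rcases hD.isGap_or_isGreatest_or_isLeast ⟨x, hx⟩ hz
    with ⟨a, b, hg, hab⟩ | ⟨a, ha, haz⟩ | ⟨b, hb, hzb⟩
  · refine ⟨G a, ?_⟩
    filter_upwards [Ioo_mem_nhds hab.1 hab.2] with t ht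
    rcases hg.eq_or_eq_of_abs_sub_le ht (hrD t) (hr t a hg.left_mem) (hr t b hg.right_mem)
      with hra | hrb
    · simp [hra]
    · simp [hrb, hgap a b hg]
  · refine ⟨G a, ?_⟩
    filter_upwards [Ioi_mem_nhds haz] with t ht
    simp [ha.eq_of_abs_sub_le ht (hrD t) (hr t a ha.1)]
  · refine ⟨G b, ?_⟩
    filter_upwards [Iio_mem_nhds hzb] with t ht
    simp [hb.eq_of_abs_sub_le ht (hrD t) (hr t b hb.1)]

end ZeroDeriv

lemma StrongDerivOn.hasDerivWithinAt {D : Set ℝ} {f h : ℝ → ℝ} {x : ℝ}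
    (hfh : StrongDerivOn D f h) (hx : x ∈ D) : HasDerivWithinAt f (h x) D x := by
  rw [hasDerivWithinAt_iff_tendsto_slope, Metric.tendsto_nhdsWithin_nhds]
  intro ε hε
  obtain ⟨δ, hδ, hslope⟩ := hfh x hx ε hε
  refine ⟨δ, hδ, fun t ht htx => ?_⟩
  rw [Real.dist_eq] at htx ⊢
  rw [slope_def_field]
  exact hslope x hx t ht.1 (Ne.symm ht.2) (by simpa using hδ) htx

theorem stmt_3_general (D : Set ℝ) (hD : IsClosed D) (f h : ℝ → ℝ)
    (hh : ContinuousOn h D)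
    (hfh : StrongDerivOn D f h) :
    ∃ F H : ℝ → ℝ, Continuous F ∧ Continuous H ∧
      (∀ x ∈ D, F x = f x) ∧ (∀ x ∈ D, H x = h x) ∧
      ∀ x : ℝ, HasDerivAt F (H x) x := by
  rcases D.eq_empty_or_nonempty with rfl | ⟨x₀, hx₀⟩
  · exact ⟨0, 0, continuous_const, continuous_const, by simp, by simp,
      fun x => hasDerivAt_const x 0⟩
  have hH := continuous_gapExt hD ⟨x₀, hx₀⟩ hh hfh
  set F : ℝ → ℝ := fun u => f x₀ + ∫ s in x₀..u, gapExt D f h s with hF_def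
  have hF : ∀ x, HasDerivAt F (gapExt D f h x) x := fun x =>
    ((hH.integral_hasStrictDerivAt x₀ x).hasDerivAt.const_add _)
  have hFf : ∀ x ∈ D, (F - f) x = (F - f) x₀ := by
    refine fun x hx => hD.eq_of_hasDerivWithinAt_zero (fun y hy => ?_) (fun a b hg => ?_) hx hx₀
    · simpa [gapExt_of_mem hy] using (hF y).hasDerivWithinAt.sub (hfh.hasDerivWithinAt hy)
    · have hFab : F b - F a = ∫ s in a..b, gapExt D f h s := by
        simp only [hF_def, add_sub_add_left_eq_sub]
        exact intervalIntegral.integral_interval_sub_left (hH.intervalIntegrable _ _)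
          (hH.intervalIntegrable _ _)
      simp only [Pi.sub_apply]
      linarith [hg.integral_gapExt (f := f) (h := h)]
  refine ⟨F, gapExt D f h, continuous_iff_continuousAt.2 fun x => (hF x).continuousAt, hH,
    fun x hx => ?_, fun x hx => gapExt_of_mem hx, hF⟩
  simpa [hF_def, sub_eq_zero] using hFf x hx

theorem stmt_3 (D : Set ℝ) (hD : IsClosed D) (f h : ℝ → ℝ)
    (hf : ContinuousOn f D) (hh : ContinuousOn h D)
    (hfh : StrongDerivOn D f h) :
    ∃ F H : ℝ → ℝ, Continuous F ∧ Continuous H ∧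
      (∀ x ∈ D, F x = f x) ∧ (∀ x ∈ D, H x = h x) ∧
      ∀ x : ℝ, HasDerivAt F (H x) x :=
  stmt_3_general D hD f h hh hfh
end

section
/- Let D ⊆ ℝ be closed and f, h : D → ℝ. Then f' = h in the strong sense if and only if there exists a continuous g : D × D → ℝ such that g(x, x) = h(x) for all x ∈ D and g(x1, x2) = (f(x2) - f(x1))/(x2 - x1) whenever x1 ≠ x2 (note this forces g(x1,x2) = g(x2,x1)). -/
/-!
The strong derivative condition at `x` says precisely that the difference quotient
`(x₁, x₂) ↦ (f x₂ - f x₁) / (x₂ - x₁)`, restricted to `D ×ˢ D` minus the diagonal, tends to `h x`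
at `(x, x)`. Hence extending it by `h` on the diagonal gives a function continuous at the diagonal
(along the diagonal itself by continuity of `h`); off the diagonal it is a quotient of continuous
functions. Conversely, restricting a continuous extension away from the diagonal gives the limit.
-/

open Filter Topology Set

noncomputable def extendedSlope (f h : ℝ → ℝ) (p : ℝ × ℝ) : ℝ :=
  if p.1 = p.2 then h p.1 else (f p.2 - f p.1) / (p.2 - p.1)

theorem strongDerivOn_iff_tendsto {D : Set ℝ} {f h : ℝ → ℝ} :
    StrongDerivOn D f h ↔ ∀ x ∈ D,
      Tendsto (fun p : ℝ × ℝ => (f p.2 - f p.1) / (p.2 - p.1))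
        (𝓝[D ×ˢ D \ diagonal ℝ] (x, x)) (𝓝 (h x)) := by
  refine forall₂_congr fun x _ => ?_
  simp only [Metric.tendsto_nhdsWithin_nhds, Prod.forall, Prod.dist_eq, Real.dist_eq,
    max_lt_iff, Set.mem_sdiff, mem_prod, mem_diagonal_iff, and_imp]
  refine forall₂_congr fun ε _ => exists_congr fun δ => and_congr_right fun _ => ?_
  exact ⟨fun H x1 x2 hx1 hx2 hne hd1 hd2 => H x1 hx1 x2 hx2 hne hd1 hd2,
    fun H x1 hx1 x2 hx2 hne hd1 hd2 => H x1 x2 hx1 hx2 hne hd1 hd2⟩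

theorem continuousWithinAt_extendedSlope_of_ne {D : Set ℝ} {f : ℝ → ℝ} (h : ℝ → ℝ)
    (hf : ContinuousOn f D) {a b : ℝ} (ha : a ∈ D) (hb : b ∈ D) (hab : a ≠ b) :
    ContinuousWithinAt (extendedSlope f h) (D ×ˢ D) (a, b) := by
  have hslope : ContinuousWithinAt (fun p : ℝ × ℝ => (f p.2 - f p.1) / (p.2 - p.1))
      (D ×ˢ D) (a, b) :=
    (((hf b hb).comp continuousWithinAt_snd fun _ hq => hq.2).sub
      ((hf a ha).comp continuousWithinAt_fst fun _ hq => hq.1)).div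
      (continuousWithinAt_snd.sub continuousWithinAt_fst) (sub_ne_zero.mpr hab.symm)
  refine hslope.congr_of_eventuallyEq ?_ (if_neg hab)
  filter_upwards [nhdsWithin_le_nhds ((isOpen_ne_fun continuous_fst continuous_snd).mem_nhds hab)]
    with q hq using if_neg hq

theorem StrongDerivOn.continuousWithinAt_extendedSlope_diag {D : Set ℝ} {f h : ℝ → ℝ}
    (H : StrongDerivOn D f h) (hh : ContinuousOn h D) {a : ℝ} (ha : a ∈ D) :
    ContinuousWithinAt (extendedSlope f h) (D ×ˢ D) (a, a) := by
  have hdiag : ContinuousWithinAt (extendedSlope f h) (D ×ˢ D ∩ diagonal ℝ) (a, a) :=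
    ((hh a ha).comp continuousWithinAt_fst fun _ hq => hq.1.1).congr
      (fun _ hq => if_pos hq.2) (if_pos rfl)
  have hoff : ContinuousWithinAt (extendedSlope f h) (D ×ˢ D \ diagonal ℝ) (a, a) := by
    have hlim := strongDerivOn_iff_tendsto.mp H a ha
    rw [ContinuousWithinAt, extendedSlope, if_pos rfl]
    exact hlim.congr' (eventually_nhdsWithin_of_forall fun q hq => (if_neg hq.2).symm)
  simpa only [inter_union_sdiff] using hdiag.union hoff

theorem StrongDerivOn.continuousOn_extendedSlope {D : Set ℝ} {f h : ℝ → ℝ}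
    (H : StrongDerivOn D f h) (hf : ContinuousOn f D) (hh : ContinuousOn h D) :
    ContinuousOn (extendedSlope f h) (D ×ˢ D) := by
  rintro ⟨a, b⟩ ⟨ha, hb⟩
  obtain rfl | hab := eq_or_ne a b
  · exact H.continuousWithinAt_extendedSlope_diag hh ha
  · exact continuousWithinAt_extendedSlope_of_ne h hf ha hb hab

theorem strongDerivOn_of_continuous_extension {D : Set ℝ} {f h : ℝ → ℝ} {g : ℝ × ℝ → ℝ}
    (hg : ContinuousOn g (D ×ˢ D)) (hdiag : ∀ x ∈ D, g (x, x) = h x)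
    (hoff : ∀ x1 ∈ D, ∀ x2 ∈ D, x1 ≠ x2 → g (x1, x2) = (f x2 - f x1) / (x2 - x1)) :
    StrongDerivOn D f h := by
  refine strongDerivOn_iff_tendsto.mpr fun x hx => ?_
  rw [← hdiag x hx]
  exact ((hg (x, x) ⟨hx, hx⟩).mono sdiff_subset).congr' <|
    eventually_nhdsWithin_of_forall fun q hq => hoff q.1 hq.1.1 q.2 hq.1.2 hq.2

theorem stmt_4_general (D : Set ℝ) (f h : ℝ → ℝ)
    (hf : ContinuousOn f D) (hh : ContinuousOn h D) :
    StrongDerivOn D f h ↔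
      ∃ g : ℝ × ℝ → ℝ, ContinuousOn g (D ×ˢ D) ∧
        (∀ x ∈ D, g (x, x) = h x) ∧
        (∀ x1 ∈ D, ∀ x2 ∈ D, x1 ≠ x2 → g (x1, x2) = (f x2 - f x1) / (x2 - x1)) := by
  refine ⟨fun H => ⟨extendedSlope f h, H.continuousOn_extendedSlope hf hh,
    fun x _ => if_pos rfl, fun _ _ _ _ hne => if_neg hne⟩, ?_⟩
  rintro ⟨g, hg, hdiag, hoff⟩
  exact strongDerivOn_of_continuous_extension hg hdiag hoff

theorem stmt_4 (D : Set ℝ) (hD : IsClosed D) (f h : ℝ → ℝ)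
    (hf : ContinuousOn f D) (hh : ContinuousOn h D) :
    StrongDerivOn D f h ↔
      ∃ g : ℝ × ℝ → ℝ, ContinuousOn g (D ×ˢ D) ∧
        (∀ x ∈ D, g (x, x) = h x) ∧
        (∀ x1 ∈ D, ∀ x2 ∈ D, x1 ≠ x2 → g (x1, x2) = (f x2 - f x1) / (x2 - x1)) :=
  stmt_4_general D f h hf hh
end

section
/- Let E be an uncountable Polish space and W ⊆ E† an open symmetric set, where E† = (E × E) \ diagonal. Then there is a Cantor set (nonempty perfect compact subset homeomorphic to 2^ω) Q ⊆ E which is either W-free (Q† ∩ W = ∅) or W-connected (Q† ⊆ W). -/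
/-!
If `E` is covered by countably many `W`-free sets, one of them is uncountable, its closure is
still `W`-free because `W` is open, and the perfect set theorem gives a Cantor set inside it.
Otherwise, by second countability the union of all open σ-free sets is σ-free, so the points
that are not in it do not form a free set and some two of them are `W`-related; small balls
around them are two `W`-related open sets that are again not σ-free. Iterating this splitting
gives a Cantor scheme whose siblings are `W`-related, and its induced map is a continuous
injection of `ℕ → Bool` with `W`-connected range.
-/

open Set Filter Topology Function
open scoped ENNReal

section Galvin

variable {E : Type*} {W : Set (E × E)}

def IsFree (W : Set (E × E)) (T : Set E) : Prop := Disjoint (T ×ˢ T) W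

def IsSigmaFree (W : Set (E × E)) (A : Set E) : Prop :=
  ∃ F : Set (Set E), F.Countable ∧ (∀ T ∈ F, IsFree W T) ∧ A ⊆ ⋃₀ F

theorem IsFree.closure [TopologicalSpace E] {T : Set E} (hT : IsFree W T) (hW : IsOpen W) :
    IsFree W (closure T) := by
  simpa only [IsFree, closure_prod_eq] using hT.closure_left hW

theorem IsFree.isSigmaFree {T : Set E} (hT : IsFree W T) : IsSigmaFree W T :=
  ⟨{T}, countable_singleton T, by simpa using hT, by simp⟩

theorem IsSigmaFree.mono {A B : Set E} (hB : IsSigmaFree W B) (hAB : A ⊆ B) : IsSigmaFree W A :=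
  let ⟨F, hFc, hF, hBF⟩ := hB
  ⟨F, hFc, hF, hAB.trans hBF⟩

theorem isSigmaFree_sUnion {S : Set (Set E)} (hSc : S.Countable) (hS : ∀ A ∈ S, IsSigmaFree W A) :
    IsSigmaFree W (⋃₀ S) := by
  choose! F hFc hF hAF using hS
  refine ⟨⋃ A ∈ S, F A, hSc.biUnion hFc, ?_, sUnion_subset fun A hA => (hAF A hA).trans ?_⟩
  · simp only [mem_iUnion]
    rintro T ⟨A, hA, hT⟩
    exact hF A hA T hT
  · exact sUnion_mono (subset_biUnion_of_mem hA)

theorem IsSigmaFree.union {A B : Set E} (hA : IsSigmaFree W A) (hB : IsSigmaFree W B) :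
    IsSigmaFree W (A ∪ B) := by
  simpa only [sUnion_pair] using
    isSigmaFree_sUnion ((countable_singleton B).insert A) (by simp [hA, hB])

theorem nonempty_of_not_isSigmaFree {A : Set E} (hA : ¬IsSigmaFree W A) : A.Nonempty := by
  contrapose! hA
  subst hA
  exact IsFree.isSigmaFree (by simp [IsFree])

theorem IsSigmaFree.exists_isFree_not_countable {A : Set E} (hA : IsSigmaFree W A)
    (hunc : ¬A.Countable) : ∃ T, IsFree W T ∧ ¬T.Countable := by
  obtain ⟨F, hFc, hF, hAF⟩ := hA
  by_contra! hcount
  exact hunc ((hFc.sUnion fun T hT => hcount T (hF T hT)).mono hAF)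

theorem isSigmaFree_sUnion_of_isOpen [TopologicalSpace E] [SecondCountableTopology E]
    {S : Set (Set E)} (hSo : ∀ V ∈ S, IsOpen V) (hS : ∀ V ∈ S, IsSigmaFree W V) :
    IsSigmaFree W (⋃₀ S) := by
  obtain ⟨T, hTc, hTS, hTU⟩ := TopologicalSpace.isOpen_sUnion_countable S hSo
  rw [← hTU]
  exact isSigmaFree_sUnion hTc fun V hV => hS V (hTS hV)

theorem exists_mem_forall_not_isSigmaFree [TopologicalSpace E] [SecondCountableTopology E]
    {U : Set E} (hU : ¬IsSigmaFree W U) :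
    ∃ x ∈ U, ∃ y ∈ U, (x, y) ∈ W ∧
      ∀ V, IsOpen V → V ⊆ U → x ∈ V ∨ y ∈ V → ¬IsSigmaFree W V := by
  set S := {V | IsOpen V ∧ V ⊆ U ∧ IsSigmaFree W V}
  have hS : IsSigmaFree W (⋃₀ S) :=
    isSigmaFree_sUnion_of_isOpen (fun V hV => hV.1) fun V hV => hV.2.2
  have hZ : ¬IsFree W (U \ ⋃₀ S) := fun hZ =>
    hU ((hZ.isSigmaFree.union hS).mono (subset_sdiff_union U (⋃₀ S)))
  obtain ⟨⟨x, y⟩, ⟨⟨hxU, hxS⟩, ⟨hyU, hyS⟩⟩, hxy⟩ := not_disjoint_iff.mp hZ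
  refine ⟨x, hxU, y, hyU, hxy, fun V hVo hVU hV hVfree => ?_⟩
  rcases hV with hxV | hyV
  exacts [hxS ⟨V, ⟨hVo, hVU, hVfree⟩, hxV⟩, hyS ⟨V, ⟨hVo, hVU, hVfree⟩, hyV⟩]

theorem exists_isOpen_mem_closure_subset_ediam_le [PseudoEMetricSpace E] {O : Set E} {x : E}
    (hO : IsOpen O) (hx : x ∈ O) {ε : ℝ≥0∞} (hε : 0 < ε) :
    ∃ V, IsOpen V ∧ x ∈ V ∧ closure V ⊆ O ∧ Metric.ediam V ≤ ε := by
  obtain ⟨r, hr, hrO⟩ := Metric.nhds_basis_closedEBall.mem_iff.mp (hO.mem_nhds hx)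
  set s := min r (ε / 2)
  refine ⟨Metric.eball x s, Metric.isOpen_eball,
    Metric.mem_eball_self (lt_min hr (ENNReal.half_pos hε.ne')), ?_, ?_⟩
  · exact (closure_minimal Metric.eball_subset_closedEBall Metric.isClosed_closedEBall).trans
      ((Metric.closedEBall_subset_closedEBall (min_le_left _ _)).trans hrO)
  · calc Metric.ediam (Metric.eball x s) ≤ 2 * s := Metric.ediam_eball_le
      _ ≤ 2 * (ε / 2) := by gcongr; exact min_le_right _ _
      _ = ε := ENNReal.mul_div_cancel two_ne_zero ENNReal.ofNat_ne_top

theorem exists_split_of_not_isSigmaFree [PseudoEMetricSpace E] [SecondCountableTopology E]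
    (hWopen : IsOpen W) (hWsymm : ∀ x y : E, (x, y) ∈ W → (y, x) ∈ W)
    {U : Set E} (hUo : IsOpen U) (hU : ¬IsSigmaFree W U) {ε : ℝ≥0∞} (hε : 0 < ε) :
    ∃ V : Bool → Set E, (∀ i, (IsOpen (V i) ∧ ¬IsSigmaFree W (V i)) ∧ closure (V i) ⊆ U ∧
      Metric.ediam (V i) ≤ ε) ∧ Pairwise fun i j => V i ×ˢ V j ⊆ W := by
  obtain ⟨x, hxU, y, hyU, hxy, hlarge⟩ := exists_mem_forall_not_isSigmaFree hU
  obtain ⟨u, v, huo, hvo, hxu, hyv, huv⟩ := isOpen_prod_iff.mp hWopen x y hxy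
  obtain ⟨V₀, hV₀o, hxV₀, hV₀, hV₀ε⟩ :=
    exists_isOpen_mem_closure_subset_ediam_le (hUo.inter huo) ⟨hxU, hxu⟩ hε
  obtain ⟨V₁, hV₁o, hyV₁, hV₁, hV₁ε⟩ :=
    exists_isOpen_mem_closure_subset_ediam_le (hUo.inter hvo) ⟨hyU, hyv⟩ hε
  have hV₀U : V₀ ⊆ U := subset_closure.trans (hV₀.trans inter_subset_left)
  have hV₁U : V₁ ⊆ U := subset_closure.trans (hV₁.trans inter_subset_left)
  have hW : V₀ ×ˢ V₁ ⊆ W := fun p hp =>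
    huv ⟨(hV₀ (subset_closure hp.1)).2, (hV₁ (subset_closure hp.2)).2⟩
  refine ⟨fun i => if i then V₁ else V₀, Bool.forall_bool.2 ⟨?_, ?_⟩, ?_⟩
  · exact ⟨⟨hV₀o, hlarge V₀ hV₀o hV₀U (.inl hxV₀)⟩, hV₀.trans inter_subset_left, hV₀ε⟩
  · exact ⟨⟨hV₁o, hlarge V₁ hV₁o hV₁U (.inr hyV₁)⟩, hV₁.trans inter_subset_left, hV₁ε⟩
  · rintro (_ | _) (_ | _) hij
    · exact absurd rfl hij
    · exact hW
    · exact fun p hp => hWsymm _ _ (hW ⟨hp.2, hp.1⟩)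
    · exact absurd rfl hij

open CantorScheme PiNat in
theorem exists_continuous_pairwise_mem_of_splitting [PseudoMetricSpace E] [CompleteSpace E]
    (P : Set E → Prop) (hne : ∀ U, P U → U.Nonempty)
    (split : ∀ U, P U → ∀ ε : ℝ≥0∞, 0 < ε → ∃ V : Bool → Set E,
      (∀ i, P (V i) ∧ closure (V i) ⊆ U ∧ Metric.ediam (V i) ≤ ε) ∧
      Pairwise fun i j => V i ×ˢ V j ⊆ W)
    {U : Set E} (hU : P U) :
    ∃ f : (ℕ → Bool) → E, Continuous f ∧ Pairwise fun a b => (f a, f b) ∈ W := by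
  choose! V hV hVW using split
  have hpos (n : ℕ) : (0 : ℝ≥0∞) < ((n + 1 : ℕ) : ℝ≥0∞)⁻¹ := by simp
  let A : List Bool → Set E :=
    fun l => l.rec U fun i l B => V B (((l.length + 1 : ℕ) : ℝ≥0∞)⁻¹) i
  have hA (i : Bool) (l : List Bool) :
      A (i :: l) = V (A l) (((l.length + 1 : ℕ) : ℝ≥0∞)⁻¹) i := rfl
  have hP (l : List Bool) : P (A l) := by
    induction l with
    | nil => exact hU
    | cons i l ih => exact (hV _ ih _ (hpos _) i).1
  have hanti : ClosureAntitone A := fun l i => (hV _ (hP l) _ (hpos _) i).2.1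
  have hdiam : VanishingDiam A := by
    intro x
    refine tendsto_of_tendsto_of_tendsto_of_le_of_le tendsto_const_nhds
      ENNReal.tendsto_inv_nat_nhds_zero (fun _ => zero_le) fun n => ?_
    cases n with
    | zero => simp
    | succ n => simpa [hA] using (hV _ (hP (res x n)) _ (hpos n) (x n)).2.2
  have hdom (x : ℕ → Bool) : x ∈ (inducedMap A).1 := by
    rw [hanti.map_of_vanishingDiam hdiam fun l => hne _ (hP l)]
    exact mem_univ x
  refine ⟨fun x => (inducedMap A).2 ⟨x, hdom x⟩,
    hdiam.map_continuous.comp (continuous_id.subtype_mk hdom), fun x y hxy => ?_⟩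
  -- `x` and `y` lie below the two different children of their longest common prefix
  set n := firstDiff x y
  have hres : res y n = res x n := res_eq_res.mpr fun m hm => (apply_eq_of_lt_firstDiff hm).symm
  have hx := map_mem ⟨x, hdom x⟩ (n + 1)
  have hy := map_mem ⟨y, hdom y⟩ (n + 1)
  rw [res_succ, hA] at hx hy
  rw [hres] at hy
  exact hVW _ (hP _) _ (hpos _) (apply_firstDiff_ne hxy) ⟨hx, hy⟩

def IsCantorSet [TopologicalSpace E] (Q : Set E) : Prop :=
  Q.Nonempty ∧ IsCompact Q ∧ Perfect Q ∧ Nonempty (Q ≃ₜ (ℕ → Bool))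

theorem tendsto_update_not (a : ℕ → Bool) :
    Tendsto (fun n => update a n !(a n)) atTop (𝓝 a) :=
  tendsto_pi_nhds.mpr fun i => tendsto_const_nhds.congr'
    (eventually_atTop.mpr ⟨i + 1, fun n hn => (update_of_ne (by omega) _ _).symm⟩)

theorem isCantorSet_range [TopologicalSpace E] [T2Space E] {f : (ℕ → Bool) → E}
    (hf : Continuous f) (hinj : Injective f) : IsCantorSet (range f) := by
  refine ⟨range_nonempty f, isCompact_range hf, ⟨(isCompact_range hf).isClosed, ?_⟩,
    ⟨(hf.isClosedEmbedding hinj).toIsEmbedding.toHomeomorph.symm⟩⟩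
  rintro _ ⟨a, rfl⟩
  rw [accPt_iff_frequently]
  refine ((hf.tendsto a).comp (tendsto_update_not a)).frequently (.of_forall fun n => ?_)
  refine ⟨hinj.ne fun h => ?_, mem_range_self _⟩
  simpa using congrFun h n

end Galvin

theorem stmt_6 (E : Type*) [TopologicalSpace E] [PolishSpace E]
    (hE : ¬ (Set.univ : Set E).Countable)
    (W : Set (E × E)) (hWsub : W ⊆ {p : E × E | p.1 ≠ p.2})
    (hWopen : IsOpen W) (hWsymm : ∀ x y : E, (x, y) ∈ W → (y, x) ∈ W) :
    ∃ Q : Set E, Q.Nonempty ∧ IsCompact Q ∧ Perfect Q ∧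
      Nonempty (Q ≃ₜ (ℕ → Bool)) ∧
      ((∀ x ∈ Q, ∀ y ∈ Q, x ≠ y → (x, y) ∉ W) ∨
       (∀ x ∈ Q, ∀ y ∈ Q, x ≠ y → (x, y) ∈ W)) := by
  by_cases hσ : IsSigmaFree W (univ : Set E)
  · obtain ⟨T, hT, hTunc⟩ := hσ.exists_isFree_not_countable hE
    obtain ⟨f, hfT, hf, hinj⟩ := isClosed_closure.exists_nat_bool_injection_of_not_countable
      fun h => hTunc (h.mono subset_closure)
    obtain ⟨h₁, h₂, h₃, h₄⟩ := isCantorSet_range hf hinj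
    refine ⟨range f, h₁, h₂, h₃, h₄, .inl fun x hx y hy _ hxy => ?_⟩
    exact disjoint_left.mp (hT.closure hWopen) ⟨hfT hx, hfT hy⟩ hxy
  · let := TopologicalSpace.upgradeIsCompletelyMetrizable E
    obtain ⟨f, hf, hfW⟩ := exists_continuous_pairwise_mem_of_splitting
      (fun U => IsOpen U ∧ ¬IsSigmaFree W U) (fun U hU => nonempty_of_not_isSigmaFree hU.2)
      (fun U hU ε hε => exists_split_of_not_isSigmaFree hWopen hWsymm hU.1 hU.2 hε)
      ⟨isOpen_univ, hσ⟩
    have hinj : Injective f := fun a b hab => by_contra fun hne => hWsub (hfW hne) (by rw [hab])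
    obtain ⟨h₁, h₂, h₃, h₄⟩ := isCantorSet_range hf hinj
    refine ⟨range f, h₁, h₂, h₃, h₄, .inr ?_⟩
    rintro _ ⟨a, rfl⟩ _ ⟨b, rfl⟩ hab
    exact hfW (ne_of_apply_ne f hab)
end

section
/- Let E be an uncountable Polish space, ℓ ∈ ℕ, and E† = ⋃_{i<ℓ} W_i where each W_i is an open symmetric subset of E†. Then there exists a perfect (Cantor) set T ⊆ E and an i < ℓ such that T is W_i-connected, i.e. T† ⊆ W_i. -/
/-!
Pull the colouring back to the Cantor space along a continuous injection and induct on the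
number of colours. For one open symmetric `W` in a perfect complete metric space, either some
nonempty open `O₀` has a pair of distinct points in `W` inside each of its nonempty open subsets,
or every nonempty open set has a nonempty open subset containing no such pair. In both cases a
fusion (a Cantor scheme of shrinking open sets, the two children of each node spanning a product
inside `G`) gives a Cantor set all of whose pairs lie in `G = W`, resp. `G = Wᶜ`; in the second
case the other colours cover the pairs of that Cantor set, and induction applies.
-/

open Set Filter Function Metric Topology CantorScheme PiNat

section CantorSpace

variable {β : Type*} [TopologicalSpace β]

theorem tendsto_update_atTop_nhds (x y : ℕ → β) :
    Tendsto (fun n => update x n (y n)) atTop (𝓝 x) := by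
  refine tendsto_pi_nhds.2 fun k => tendsto_const_nhds.congr' ?_
  filter_upwards [eventually_gt_atTop k] with n hn
  exact (update_of_ne hn.ne _ _).symm

instance PiNat.perfectSpace [Nontrivial β] : PerfectSpace (ℕ → β) := by
  refine ⟨preperfect_iff_nhds.2 fun x _ U hU => ?_⟩
  choose y hy using fun n => exists_ne (x n)
  obtain ⟨n, hn⟩ := ((tendsto_update_atTop_nhds x y).eventually_mem hU).exists
  refine ⟨update x n (y n), ⟨hn, mem_univ _⟩, fun h => hy n ?_⟩
  simpa using congr_fun h n

end CantorSpace

theorem Topology.IsClosedEmbedding.perfect_range {X Y : Type*} [TopologicalSpace X]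
    [TopologicalSpace Y] [PerfectSpace X] {f : X → Y} (hf : IsClosedEmbedding f) :
    Perfect (range f) := by
  refine ⟨hf.isClosed_range, preperfect_iff_nhds.2 ?_⟩
  rintro _ ⟨x, rfl⟩ U hU
  obtain ⟨y, ⟨hyU, -⟩, hyx⟩ := preperfect_iff_nhds.1 PerfectSpace.univ_preperfect x (mem_univ x)
    (f ⁻¹' U) (hf.continuous.continuousAt hU)
  exact ⟨f y, ⟨hyU, mem_range_self y⟩, hf.injective.ne hyx⟩

namespace CantorScheme

variable {α : Type*} {A : List Bool → Set α}

theorem exists_continuous_injective_mem_res [MetricSpace α] [CompleteSpace α]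
    (hanti : ClosureAntitone A) (hdiam : VanishingDiam A) (hdisj : CantorScheme.Disjoint A)
    (hne : ∀ l, (A l).Nonempty) :
    ∃ f : (ℕ → Bool) → α, Continuous f ∧ Injective f ∧ ∀ x n, f x ∈ A (res x n) := by
  have hdom : ∀ x, x ∈ (inducedMap A).1 := fun x => by
    rw [hanti.map_of_vanishingDiam hdiam hne]
    exact mem_univ x
  refine ⟨fun x => (inducedMap A).2 ⟨x, hdom x⟩, hdiam.map_continuous.comp
    (continuous_id.subtype_mk _), fun x y hxy => ?_, fun x n => map_mem ⟨x, hdom x⟩ n⟩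
  simpa only [← Subtype.val_inj] using hdisj.map_injective hxy

theorem pairwise_mem_of_mem_res {G : Set (α × α)} (hG : ∀ x y, (x, y) ∈ G → (y, x) ∈ G)
    (hA : ∀ l, A (true :: l) ×ˢ A (false :: l) ⊆ G) {f : (ℕ → Bool) → α}
    (hf : ∀ x n, f x ∈ A (res x n)) : Pairwise fun a b => (f a, f b) ∈ G := by
  intro a b hab
  set n := firstDiff a b
  have hres : res a n = res b n := res_eq_res.2 fun m hm => apply_eq_of_lt_firstDiff hm
  have ha := hf a (n + 1)
  have hb := hf b (n + 1)
  rw [res_succ] at ha hb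
  rw [← hres] at hb
  have hne : a n ≠ b n := apply_firstDiff_ne hab
  cases h₁ : a n <;> cases h₂ : b n <;> simp only [h₁, h₂, ne_eq, not_true_eq_false] at hne ha hb
  · exact hG _ _ (hA _ ⟨hb, ha⟩)
  · exact hA _ ⟨ha, hb⟩

end CantorScheme

section Fusion

variable {α : Type*} [MetricSpace α] {G : Set (α × α)}

theorem exists_split_of_mem_nhds {O : Set α} (hO : IsOpen O) {x y : α} (hx : x ∈ O) (hy : y ∈ O)
    (hxy : x ≠ y) (hG : G ∈ 𝓝 (x, y)) {ε : ℝ} (hε : 0 < ε) :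
    ∃ U : Bool → Set α, (∀ b, IsOpen (U b) ∧ (U b).Nonempty ∧ closure (U b) ⊆ O ∧
      ediam (U b) ≤ ENNReal.ofReal ε) ∧ Disjoint (U true) (U false) ∧ U true ×ˢ U false ⊆ G := by
  have hsmall : ∀ᶠ δ in 𝓝[>] (0 : ℝ), 0 < δ ∧ closedBall x δ ⊆ O ∧ closedBall y δ ⊆ O ∧
      ball (x, y) δ ⊆ G ∧ δ < dist x y / 2 ∧ δ < ε / 2 := by
    filter_upwards [self_mem_nhdsWithin,
      nhdsWithin_le_nhds (eventually_closedBall_subset (hO.mem_nhds hx)),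
      nhdsWithin_le_nhds (eventually_closedBall_subset (hO.mem_nhds hy)),
      nhdsWithin_le_nhds (eventually_ball_subset hG),
      nhdsWithin_le_nhds (eventually_lt_nhds (half_pos (dist_pos.2 hxy))),
      nhdsWithin_le_nhds (eventually_lt_nhds (half_pos hε))] with δ h₀ h₁ h₂ h₃ h₄ h₅
    exact ⟨h₀, h₁, h₂, h₃, h₄, h₅⟩
  obtain ⟨δ, hδ, hxO, hyO, hδG, hδxy, hδε⟩ := hsmall.exists
  have hball : ∀ z, closedBall z δ ⊆ O → IsOpen (ball z δ) ∧ (ball z δ).Nonempty ∧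
      closure (ball z δ) ⊆ O ∧ ediam (ball z δ) ≤ ENNReal.ofReal ε := fun z hz =>
    ⟨isOpen_ball, nonempty_ball.2 hδ, closure_ball_subset_closedBall.trans hz,
      (ediam_le_of_forall_dist_le fun a ha b hb => by
        linarith [dist_triangle_right a b z, mem_ball.1 ha, mem_ball.1 hb])⟩
  have hdisj : Disjoint (ball x δ) (ball y δ) := ball_disjoint_ball (by linarith)
  refine ⟨fun b => ball (cond b x y) δ, ?_, hdisj, ?_⟩
  · rintro (_ | _)
    exacts [hball y hyO, hball x hxO]
  · simpa only [cond_true, cond_false, ball_prod_same] using hδG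

theorem exists_continuous_injective_pairwise_mem [CompleteSpace α]
    (hG : ∀ x y, (x, y) ∈ G → (y, x) ∈ G) {O₀ : Set α} (hO₀ : IsOpen O₀) (hne : O₀.Nonempty)
    (hsplit : ∀ O, IsOpen O → O ⊆ O₀ → O.Nonempty → ∃ x ∈ O, ∃ y ∈ O, x ≠ y ∧ G ∈ 𝓝 (x, y)) :
    ∃ f : (ℕ → Bool) → α, Continuous f ∧ Injective f ∧ Pairwise fun a b => (f a, f b) ∈ G := by
  let Node := {O : Set α // IsOpen O ∧ O ⊆ O₀ ∧ O.Nonempty}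
  let ε (n : ℕ) : ℝ := 1 / (n + 1)
  have hchildren : ∀ (O : Node) (n : ℕ), ∃ U : Bool → Set α, (∀ b, IsOpen (U b) ∧
      (U b).Nonempty ∧ closure (U b) ⊆ O.1 ∧ ediam (U b) ≤ ENNReal.ofReal (ε n)) ∧
      Disjoint (U true) (U false) ∧ U true ×ˢ U false ⊆ G := fun O n => by
    obtain ⟨x, hx, y, hy, hxy, hGxy⟩ := hsplit O.1 O.2.1 O.2.2.1 O.2.2.2
    exact exists_split_of_mem_nhds O.2.1 hx hy hxy hGxy Nat.one_div_pos_of_nat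
  choose U hU hUdisj hUG using hchildren
  let child (O : Node) (n : ℕ) (b : Bool) : Node :=
    ⟨U O n b, (hU O n b).1, (subset_closure.trans (hU O n b).2.2.1).trans O.2.2.1, (hU O n b).2.1⟩
  let N : List Bool → Node := fun l =>
    l.rec ⟨O₀, hO₀, subset_rfl, hne⟩ fun b l N => child N l.length b
  let A (l : List Bool) : Set α := (N l).1
  have hdiam : VanishingDiam A := fun x => by
    have hε : Tendsto (fun n => ENNReal.ofReal (ε n)) atTop (𝓝 0) := by
      simpa [ε] using ENNReal.tendsto_ofReal tendsto_one_div_add_atTop_nhds_zero_nat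
    refine (tendsto_add_atTop_iff_nat 1).1 (tendsto_of_tendsto_of_tendsto_of_le_of_le
      tendsto_const_nhds hε (fun _ => zero_le) fun n => ?_)
    simpa only [A, N, res_succ, res_length] using (hU (N (res x n)) (res x n).length (x n)).2.2.2
  have hdisj : CantorScheme.Disjoint A := by
    rintro l (_ | _) (_ | _) hab
    exacts [absurd rfl hab, (hUdisj _ _).symm, hUdisj _ _, absurd rfl hab]
  obtain ⟨f, hfc, hfi, hfA⟩ := exists_continuous_injective_mem_res
    (fun l b => (hU (N l) l.length b).2.2.1) hdiam hdisj fun l => (N l).2.2.2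
  exact ⟨f, hfc, hfi, pairwise_mem_of_mem_res hG (fun l => hUG (N l) l.length) hfA⟩

theorem exists_continuous_injective_pairwise_mem_or_notMem [CompleteSpace α] [PerfectSpace α]
    [Nonempty α] {W : Set (α × α)} (hW : IsOpen W) (hWsymm : ∀ x y, (x, y) ∈ W → (y, x) ∈ W) :
    ∃ f : (ℕ → Bool) → α, Continuous f ∧ Injective f ∧
      ((Pairwise fun a b => (f a, f b) ∈ W) ∨ Pairwise fun a b => (f a, f b) ∉ W) := by
  by_cases hdense : ∃ O₀, IsOpen O₀ ∧ O₀.Nonempty ∧ ∀ O, IsOpen O → O ⊆ O₀ → O.Nonempty →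
      ∃ x ∈ O, ∃ y ∈ O, x ≠ y ∧ (x, y) ∈ W
  · obtain ⟨O₀, hO₀, hne, hpair⟩ := hdense
    obtain ⟨f, hfc, hfi, hf⟩ := exists_continuous_injective_pairwise_mem hWsymm hO₀ hne
      fun O hO hOO₀ hOne => by
        obtain ⟨x, hx, y, hy, hxy, hxyW⟩ := hpair O hO hOO₀ hOne
        exact ⟨x, hx, y, hy, hxy, hW.mem_nhds hxyW⟩
    exact ⟨f, hfc, hfi, .inl hf⟩
  · push Not at hdense
    obtain ⟨f, hfc, hfi, hf⟩ := exists_continuous_injective_pairwise_mem (G := Wᶜ)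
      (fun x y hxy hyx => hxy (hWsymm y x hyx)) isOpen_univ univ_nonempty
      fun O hO _ hOne => by
        obtain ⟨O', hO', hO'O, ⟨x, hx⟩, hfree⟩ := hdense O hO hOne
        obtain ⟨y, ⟨hy, -⟩, hyx⟩ := preperfect_iff_nhds.1 hO'.preperfect x hx O' (hO'.mem_nhds hx)
        have hnhds : O' ×ˢ O' ∩ {p | p.1 ≠ p.2} ∈ 𝓝 (x, y) :=
          ((hO'.prod hO').inter (isOpen_ne_fun continuous_fst continuous_snd)).mem_nhds
            ⟨⟨hx, hy⟩, hyx.symm⟩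
        exact ⟨x, hO'O hx, y, hO'O hy, hyx.symm,
          mem_of_superset hnhds fun p ⟨⟨hp₁, hp₂⟩, hp⟩ => hfree p.1 hp₁ p.2 hp₂ hp⟩
    exact ⟨f, hfc, hfi, .inr hf⟩

end Fusion

theorem exists_cantor_pairwise_mem_of_isOpen (ℓ : ℕ) (W : Fin ℓ → Set ((ℕ → Bool) × (ℕ → Bool)))
    (hW : ∀ i, IsOpen (W i)) (hWsymm : ∀ i x y, (x, y) ∈ W i → (y, x) ∈ W i)
    (hcover : Pairwise fun x y => ∃ i, (x, y) ∈ W i) :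
    ∃ f : (ℕ → Bool) → ℕ → Bool, Continuous f ∧ Injective f ∧
      ∃ i, Pairwise fun a b => (f a, f b) ∈ W i := by
  induction ℓ with
  | zero =>
    obtain ⟨x, y, hxy⟩ := exists_pair_ne (ℕ → Bool)
    exact (hcover hxy).elim fun i _ => i.elim0
  | succ n ih =>
    let := TopologicalSpace.upgradeIsCompletelyMetrizable (ℕ → Bool)
    obtain ⟨g, hgc, hgi, hmono | havoid⟩ :=
      exists_continuous_injective_pairwise_mem_or_notMem (hW (Fin.last n)) (hWsymm _)
    · exact ⟨g, hgc, hgi, Fin.last n, hmono⟩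
    have hcover' : Pairwise fun x y => ∃ i : Fin n, (g x, g y) ∈ W i.castSucc := by
      intro x y hxy
      obtain ⟨i, hi⟩ := hcover (hgi.ne hxy)
      induction i using Fin.lastCases with
      | last => exact absurd hi (havoid hxy)
      | cast i => exact ⟨i, hi⟩
    obtain ⟨h, hhc, hhi, i, hi⟩ := ih (fun i => Prod.map g g ⁻¹' W i.castSucc)
      (fun i => (hW _).preimage (hgc.prodMap hgc)) (fun i x y => hWsymm _ (g x) (g y)) hcover'
    exact ⟨g ∘ h, hgc.comp hhc, hgi.comp hhi, i.castSucc, hi⟩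

theorem stmt_7_general (E : Type*) [TopologicalSpace E] [PolishSpace E]
    (hE : ¬ (Set.univ : Set E).Countable)
    (ℓ : ℕ) (W : Fin ℓ → Set (E × E))
    (hWopen : ∀ i, IsOpen (W i))
    (hWsymm : ∀ i, ∀ x y : E, (x, y) ∈ W i → (y, x) ∈ W i)
    (hcover : {p : E × E | p.1 ≠ p.2} ⊆ ⋃ i, W i) :
    ∃ T : Set E, T.Nonempty ∧ IsCompact T ∧ Perfect T ∧
      Nonempty (T ≃ₜ (ℕ → Bool)) ∧
      ∃ i : Fin ℓ, ∀ x ∈ T, ∀ y ∈ T, x ≠ y → (x, y) ∈ W i := by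
  obtain ⟨g, -, hgc, hgi⟩ := isClosed_univ.exists_nat_bool_injection_of_not_countable hE
  obtain ⟨h, hhc, hhi, i, hi⟩ := exists_cantor_pairwise_mem_of_isOpen ℓ
    (fun i => Prod.map g g ⁻¹' W i) (fun i => (hWopen i).preimage (hgc.prodMap hgc))
    (fun i x y => hWsymm i (g x) (g y))
    fun x y hxy => (mem_iUnion.1 (hcover (a := (g x, g y)) (hgi.ne hxy)) :)
  have hf : IsClosedEmbedding (g ∘ h) := (hgc.comp hhc).isClosedEmbedding (hgi.comp hhi)
  refine ⟨range (g ∘ h), range_nonempty _, isCompact_range hf.continuous, hf.perfect_range,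
    ⟨hf.isEmbedding.toHomeomorph.symm⟩, i, ?_⟩
  rintro _ ⟨a, rfl⟩ _ ⟨b, rfl⟩ hab
  exact hi (ne_of_apply_ne _ hab)

theorem stmt_7 (E : Type*) [TopologicalSpace E] [PolishSpace E]
    (hE : ¬ (Set.univ : Set E).Countable)
    (ℓ : ℕ) (W : Fin ℓ → Set (E × E))
    (hWsub : ∀ i, W i ⊆ {p : E × E | p.1 ≠ p.2})
    (hWopen : ∀ i, IsOpen (W i))
    (hWsymm : ∀ i, ∀ x y : E, (x, y) ∈ W i → (y, x) ∈ W i)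
    (hcover : {p : E × E | p.1 ≠ p.2} ⊆ ⋃ i, W i) :
    ∃ T : Set E, T.Nonempty ∧ IsCompact T ∧ Perfect T ∧
      Nonempty (T ≃ₜ (ℕ → Bool)) ∧
      ∃ i : Fin ℓ, ∀ x ∈ T, ∀ y ∈ T, x ≠ y → (x, y) ∈ W i :=
  stmt_7_general E hE ℓ W hWopen hWsymm hcover
end

section
/- Let E be an uncountable Polish space, F a compact metric space, and g : E† → F continuous with g(x, y) = g(y, x) for all x ≠ y. Then there is a Cantor set Q ⊆ E such that the restriction of g to Q† extends to a continuous function ĝ : Q × Q → F. -/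
/-!
Replace `E` by its perfect kernel `P`. For `x ∈ P` let `clusterValues g x ⊆ F` be the set of
cluster values of `g (u, v)` as `u ≠ v` tend to `x`. It is nonempty since `F` is compact, and it
has closed graph, so by a Baire category argument (Fort's theorem) it is lower hemicontinuous at
the points of a dense set. At such a point `x`, with `b ∈ clusterValues g x`, one finds two small
disjoint balls on whose product `g` stays close to `b`, centred at points of the dense set that
again carry cluster values close to `b`. Iterating gives a binary Cantor scheme of balls with
attached values; its branches form the Cantor set `Q`. On `Q × Q` the extension is `g` off the
diagonal and the limit of the attached values on it: two branches that first split at depth `m`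
are mapped by `g` near the value of their common cell of depth `m`, which gives continuity at
the diagonal.
-/

open Set Filter Topology Metric PiNat Function

instance perfectSpace_nat_pi {β : Type*} [TopologicalSpace β] [Nontrivial β] :
    PerfectSpace (ℕ → β) := by
  refine perfectSpace_iff_forall_not_isolated.2 fun ω => ?_
  choose b hb using fun n => exists_ne (ω n)
  refine mem_closure_iff_nhdsWithin_neBot.1 (mem_closure_of_tendsto (b := atTop)
    (f := fun n => update ω n (b n)) ?_
    (Eventually.of_forall fun n h => hb n (by simpa using congrFun h n)))
  refine tendsto_pi_nhds.2 fun i => tendsto_const_nhds.congr' ?_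
  filter_upwards [eventually_gt_atTop i] with n hn
  exact (update_of_ne hn.ne _ _).symm

theorem preperfect_range {X E : Type*} [TopologicalSpace X] [PerfectSpace X]
    [TopologicalSpace E] {φ : X → E} (hφ : Continuous φ) (hinj : Injective φ) :
    Preperfect (range φ) := by
  rintro _ ⟨x, rfl⟩
  have hx := accPt_iff_frequently.1 (PerfectSpace.univ_preperfect x (mem_univ x))
  exact accPt_iff_frequently.2
    ((hφ.tendsto x).frequently (hx.mono fun y hy => ⟨hinj.ne hy.1, mem_range_self y⟩))

theorem Preperfect.perfectSpace_coe {E : Type*} [TopologicalSpace E] {s : Set E}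
    (hs : Preperfect s) : PerfectSpace s := by
  refine perfectSpace_iff_forall_not_isolated.2 fun ⟨x, hx⟩ => ?_
  rw [← mem_closure_iff_nhdsWithin_neBot, closure_subtype, mem_closure_iff_nhdsWithin_neBot]
  convert accPt_principal_iff_nhdsWithin.1 (hs x hx) using 2
  ext y
  simp [and_comm]

theorem exists_continuousOn_extension_of_cantor {X E F : Type*} [TopologicalSpace X]
    [CompactSpace X] [TopologicalSpace E] [T2Space E] [TopologicalSpace F] {φ : X → E}
    (hφ : Continuous φ) (hinj : Injective φ) {g : E × E → F} {G : X × X → F}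
    (hG : Continuous G) (hGg : ∀ α β, α ≠ β → G (α, β) = g (φ α, φ β)) :
    ∃ ghat : E × E → F, ContinuousOn ghat (range φ ×ˢ range φ) ∧
      ∀ x ∈ range φ, ∀ y ∈ range φ, x ≠ y → ghat (x, y) = g (x, y) := by
  have hind := (hφ.isClosedEmbedding hinj).isInducing
  have hinj₂ : Injective (Prod.map φ φ) := hinj.prodMap hinj
  refine ⟨extend (Prod.map φ φ) G g, ?_, ?_⟩
  · rw [← range_prodMap, ← image_univ, (hind.prodMap hind).continuousOn_image_iff,
      show extend (Prod.map φ φ) G g ∘ Prod.map φ φ = G from funext (hinj₂.extend_apply G g)]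
    exact hG.continuousOn
  · rintro _ ⟨α, rfl⟩ _ ⟨β, rfl⟩ hne
    rw [show (φ α, φ β) = Prod.map φ φ (α, β) from rfl, hinj₂.extend_apply]
    exact hGg α β fun h => hne (congrArg φ h)

theorem exists_boolTree_of_forall_exists {α : Type*} (good : α → Prop)
    (R : α → (Bool → α) → Prop)
    (h : ∀ a, good a → ∃ d : Bool → α, (∀ i, good (d i)) ∧ R a d) {a₀ : α} (h₀ : good a₀) :
    ∃ T : List Bool → α, ∀ s, good (T s) ∧ R (T s) fun i => T (i :: s) := by
  choose d hd using h
  let T : List Bool → {a // good a} := fun s =>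
    s.rec ⟨a₀, h₀⟩ fun i _ t => ⟨d t t.2 i, (hd t t.2).1 i⟩
  exact ⟨fun s => (T s).1, fun s => ⟨(T s).2, (hd _ (T s).2).2⟩⟩

theorem CantorScheme.exists_continuous_forall_mem {β α : Type*} [TopologicalSpace β]
    [DiscreteTopology β] [PseudoMetricSpace α] [CompleteSpace α] {A : List β → Set α}
    (hdiam : VanishingDiam A) (hanti : ClosureAntitone A) (hne : ∀ l, (A l).Nonempty) :
    ∃ f : (ℕ → β) → α, Continuous f ∧ ∀ x n, f x ∈ A (res x n) := by
  have hdom := hanti.map_of_vanishingDiam hdiam hne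
  exact ⟨fun x => (inducedMap A).2 ⟨x, hdom ▸ mem_univ x⟩,
    hdiam.map_continuous.comp (continuous_id.subtype_mk _), fun x n => map_mem _ n⟩

section LowerHemicontinuity

variable {X F : Type*} [TopologicalSpace X] [MetricSpace F]

theorem lowerHemicontinuousAt_iff_eventually_dist_lt {Φ : X → Set F} {x : X} :
    LowerHemicontinuousAt Φ x ↔
      ∀ b ∈ Φ x, ∀ ε > 0, ∀ᶠ y in 𝓝 x, ∃ b' ∈ Φ y, dist b' b < ε := by
  rw [lowerHemicontinuousAt_iff]
  constructor
  · intro h b hb ε hε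
    filter_upwards [h (ball b ε) isOpen_ball ⟨b, hb, mem_ball_self hε⟩] with y ⟨b', hb', hb'b⟩
    exact ⟨b', hb', hb'b⟩
  · rintro h u hu ⟨b, hb, hbu⟩
    obtain ⟨ε, hε, hεu⟩ := Metric.isOpen_iff.1 hu b hbu
    filter_upwards [h b hb ε hε] with y ⟨b', hb', hb'b⟩
    exact ⟨b', hb', hεu hb'b⟩

theorem isClosed_setOf_exists_mem_closedBall [CompactSpace F] {Φ : X → Set F}
    (hΦ : IsClosed {q : X × F | q.2 ∈ Φ q.1}) (u : F) (r : ℝ) :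
    IsClosed {x | ∃ b ∈ Φ x, b ∈ closedBall u r} := by
  have : {x | ∃ b ∈ Φ x, b ∈ closedBall u r} =
      Prod.fst '' ({q : X × F | q.2 ∈ Φ q.1} ∩ Prod.snd ⁻¹' closedBall u r) := by
    ext x; simp
  rw [this]
  exact isClosedMap_fst_of_compactSpace _
    (hΦ.inter (isClosed_closedBall.preimage continuous_snd))

theorem eventually_residual_lowerHemicontinuousAt [BaireSpace X] [CompactSpace F]
    {Φ : X → Set F} (hΦ : IsClosed {q : X × F | q.2 ∈ Φ q.1}) :
    ∀ᶠ x in residual X, LowerHemicontinuousAt Φ x := by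
  set S : F → ℝ → Set X := fun u r => {x | ∃ b ∈ Φ x, b ∈ closedBall u r}
  -- `S u (2 * r)` is closed, so its frontier is nowhere dense.
  have hS : ∀ u, ∀ r ≥ 0, ∀ᶠ x in residual X, x ∈ S u r → x ∈ interior (S u (2 * r)) := by
    intro u r hr
    have hcl := isClosed_setOf_exists_mem_closedBall hΦ u (2 * r)
    have hnd : Dense (frontier (S u (2 * r)))ᶜ :=
      interior_eq_empty_iff_dense_compl.1 (interior_frontier hcl)
    filter_upwards [residual_of_dense_open isClosed_frontier.isOpen_compl hnd] with x hx hxS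
    rw [hcl.frontier_eq] at hx
    obtain ⟨b, hb, hbu⟩ := hxS
    by_contra hint
    exact hx ⟨⟨b, hb, closedBall_subset_closedBall (by linarith) hbu⟩, hint⟩
  obtain ⟨D, hDc, hD⟩ := TopologicalSpace.exists_countable_dense F
  have hall : ∀ᶠ x in residual X, ∀ u ∈ D, ∀ m : ℕ,
      x ∈ S u (1 / (m + 1)) → x ∈ interior (S u (2 * (1 / (m + 1)))) := by
    rw [eventually_countable_ball hDc]
    exact fun u _ => eventually_countable_forall.2 fun m => hS u _ (by positivity)
  filter_upwards [hall] with x hx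
  refine lowerHemicontinuousAt_iff_eventually_dist_lt.2 fun b hb ε hε => ?_
  obtain ⟨m, hm⟩ := exists_nat_one_div_lt (by positivity : 0 < ε / 3)
  obtain ⟨u, huD, hbu⟩ := hD.exists_dist_lt b (by positivity : (0 : ℝ) < 1 / (m + 1))
  have hxS : x ∈ S u (1 / (m + 1)) := ⟨b, hb, mem_closedBall.2 (dist_comm u b ▸ hbu.le)⟩
  filter_upwards [mem_interior_iff_mem_nhds.1 (hx u huD m hxS)] with y ⟨b', hb', hb'u⟩
  refine ⟨b', hb', ?_⟩
  have := dist_triangle b' u b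
  rw [mem_closedBall] at hb'u
  rw [dist_comm] at hbu
  linarith

end LowerHemicontinuity

section ClusterValues

variable {X F : Type*} [MetricSpace X] [MetricSpace F] (g : X × X → F)

def clusterValues (x : X) : Set F :=
  {b | MapClusterPt b (𝓝[{p : X × X | p.1 ≠ p.2}] (x, x)) g}

variable {g}

theorem mem_clusterValues_iff {x : X} {b : F} :
    b ∈ clusterValues g x ↔
      ∀ δ > 0, ∀ ε > 0, ∃ p : X × X, p.1 ≠ p.2 ∧ dist p (x, x) < δ ∧ dist (g p) b < ε := by
  simp only [clusterValues, mem_ofPred_eq, MapClusterPt,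
    (nhds_basis_ball.clusterPt_iff (nhdsWithin_basis_ball.map g))]
  constructor
  · intro h δ hδ ε hε
    obtain ⟨_, hb, p, ⟨hpx, hp⟩, rfl⟩ := h hε hδ
    exact ⟨p, hp, hpx, hb⟩
  · intro h ε hε δ hδ
    obtain ⟨p, hp, hpx, hb⟩ := h δ hδ ε hε
    exact ⟨g p, hb, p, ⟨hpx, hp⟩, rfl⟩

theorem isClosed_graph_clusterValues : IsClosed {q : X × F | q.2 ∈ clusterValues g q.1} := by
  refine isClosed_of_closure_subset fun ⟨x, b⟩ hxb => mem_clusterValues_iff.2 ?_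
  intro δ hδ ε hε
  obtain ⟨⟨x', b'⟩, hq, hd⟩ := Metric.mem_closure_iff.1 hxb (min (δ / 2) (ε / 2)) (by positivity)
  simp only [Prod.dist_eq, max_lt_iff, lt_min_iff] at hd
  obtain ⟨p, hp, hpx, hpb⟩ := mem_clusterValues_iff.1 hq (δ / 2) (by positivity) (ε / 2)
    (by positivity)
  refine ⟨p, hp, ?_, ?_⟩
  · calc dist p (x, x) ≤ dist p (x', x') + dist (x', x') (x, x) := dist_triangle _ _ _
      _ < δ / 2 + δ / 2 := by
        have : dist (x', x') (x, x) = dist x' x := by simp [Prod.dist_eq]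
        rw [this, dist_comm x']
        exact add_lt_add hpx hd.1.1
      _ = δ := by ring
  · calc dist (g p) b ≤ dist (g p) b' + dist b' b := dist_triangle _ _ _
      _ < ε / 2 + ε / 2 := add_lt_add hpb (by rw [dist_comm]; exact hd.2.2)
      _ = ε := by ring

theorem clusterValues_nonempty [CompactSpace F] [PerfectSpace X] (x : X) :
    (clusterValues g x).Nonempty := by
  have : (x, x) ∈ closure {p : X × X | p.1 ≠ p.2} := by
    refine closure_mono (s := {x}ᶜ ×ˢ {x}) (fun p hp => ?_) ?_
    · rw [mem_prod, mem_compl_singleton_iff, mem_singleton_iff] at hp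
      exact fun h => hp.1 (h.trans hp.2)
    · rw [closure_prod_eq, closure_compl_singleton, closure_singleton]
      exact ⟨mem_univ x, rfl⟩
  have := mem_closure_iff_nhdsWithin_neBot.1 this
  exact exists_clusterPt_of_compactSpace _

end ClusterValues

theorem exists_closedBall_prod_subset_of_mem_clusterValues {X F : Type*} [MetricSpace X]
    [MetricSpace F] {g : X × X → F} (hg : ContinuousOn g {p : X × X | p.1 ≠ p.2}) {G : Set X}
    (hG : Dense G) {x : X} {b : F} (hb : b ∈ clusterValues g x) {ε δ : ℝ} (hε : 0 < ε)
    (hδ : 0 < δ) :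
    ∃ y ∈ G, ∃ z ∈ G, ∃ ρ > 0,
      closedBall (y, z) ρ ⊆ {p : X × X | p.1 ≠ p.2} ∩ g ⁻¹' ball b ε ∩ ball (x, x) δ := by
  set W := {p : X × X | p.1 ≠ p.2} ∩ g ⁻¹' ball b ε ∩ ball (x, x) δ
  have hW : IsOpen W :=
    (hg.isOpen_inter_preimage (isOpen_ne_fun continuous_fst continuous_snd) isOpen_ball).inter
      isOpen_ball
  obtain ⟨p, hp, hpx, hpb⟩ := mem_clusterValues_iff.1 hb δ hδ ε hε
  obtain ⟨⟨y, z⟩, hyzW, hy, hz⟩ := (hG.prod hG).inter_open_nonempty W hW ⟨p, ⟨hp, hpb⟩, hpx⟩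
  obtain ⟨ρ, hρ, hρW⟩ := nhds_basis_closedBall.mem_iff.1 (hW.mem_nhds hyzW)
  exact ⟨y, hy, z, hz, ρ, hρ, hρW⟩

structure Cell (X F : Type*) where
  point : X
  value : F
  radius : ℝ

namespace Cell

variable {X F : Type*} [MetricSpace X] [MetricSpace F] {g : X × X → F}

def toSet (c : Cell X F) : Set (X × F) :=
  closedBall (c.point, c.value) c.radius

theorem mem_toSet {c : Cell X F} {p : X × F} :
    p ∈ c.toSet ↔ p.1 ∈ closedBall c.point c.radius ∧ p.2 ∈ closedBall c.value c.radius := by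
  rw [toSet, ← closedBall_prod_same]
  rfl

variable (g) in
def IsAdmissible (c : Cell X F) : Prop :=
  LowerHemicontinuousAt (clusterValues g) c.point ∧ c.value ∈ clusterValues g c.point ∧
    0 < c.radius

variable (g) in
def IsSplit (c : Cell X F) (d : Bool → Cell X F) : Prop :=
  (∀ i, (d i).radius ≤ c.radius / 2 ∧ (d i).toSet ⊆ c.toSet) ∧
    ∀ u ∈ closedBall (d false).point (d false).radius,
      ∀ v ∈ closedBall (d true).point (d true).radius,
        u ≠ v ∧ g (u, v) ∈ closedBall c.value c.radius

theorem IsSplit.ne_and_mem (hsymm : ∀ x y : X, x ≠ y → g (x, y) = g (y, x)) {c : Cell X F}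
    {d : Bool → Cell X F} (h : c.IsSplit g d) {i j : Bool} (hij : i ≠ j) {u v : X}
    (hu : u ∈ closedBall (d i).point (d i).radius) (hv : v ∈ closedBall (d j).point (d j).radius) :
    u ≠ v ∧ g (u, v) ∈ closedBall c.value c.radius := by
  cases i <;> cases j
  · exact absurd rfl hij
  · exact h.2 u hu v hv
  · obtain ⟨hne, hmem⟩ := h.2 v hv u hu
    exact ⟨hne.symm, hsymm u v hne.symm ▸ hmem⟩
  · exact absurd rfl hij

theorem exists_isSplit (hg : ContinuousOn g {p : X × X | p.1 ≠ p.2})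
    (hG : Dense {x | LowerHemicontinuousAt (clusterValues g) x}) {c : Cell X F}
    (hc : c.IsAdmissible g) :
    ∃ d : Bool → Cell X F, (∀ i, (d i).IsAdmissible g) ∧ c.IsSplit g d := by
  obtain ⟨hlhc, hb, hr⟩ := hc
  set ε := c.radius / 2 with hε_def
  have hε : 0 < ε := half_pos hr
  obtain ⟨δ, hδ, hnear⟩ := Metric.eventually_nhds_iff.1
    (lowerHemicontinuousAt_iff_eventually_dist_lt.1 hlhc _ hb ε hε)
  obtain ⟨y, hy, z, hz, ρ, hρ, hW⟩ :=
    exists_closedBall_prod_subset_of_mem_clusterValues hg hG hb hε (lt_min hδ hε)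
  have hyz : dist y c.point < min δ ε ∧ dist z c.point < min δ ε := by
    have h := (hW (mem_closedBall_self hρ.le)).2
    rw [mem_ball, Prod.dist_eq, max_lt_iff] at h
    exact h
  obtain ⟨b₀, hb₀, hb₀b⟩ := hnear (hyz.1.trans_le (min_le_left _ _))
  obtain ⟨b₁, hb₁, hb₁b⟩ := hnear (hyz.2.trans_le (min_le_left _ _))
  set ρ' := min ρ ε
  have hρ' : 0 < ρ' := lt_min hρ hε
  have hsub : ∀ w bw, dist w c.point < min δ ε → dist bw c.value < ε →
      closedBall (w, bw) ρ' ⊆ c.toSet := by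
    intro w bw hw hbw
    refine closedBall_subset_closedBall' ?_
    have : dist (w, bw) (c.point, c.value) < ε :=
      max_lt (hw.trans_le (min_le_right _ _)) hbw
    linarith [min_le_right ρ ε]
  refine ⟨fun i => if i then ⟨z, b₁, ρ'⟩ else ⟨y, b₀, ρ'⟩, ?_, ?_, ?_⟩
  · rintro (_ | _)
    exacts [⟨hy, hb₀, hρ'⟩, ⟨hz, hb₁, hρ'⟩]
  · rintro (_ | _)
    exacts [⟨min_le_right _ _, hsub y b₀ hyz.1 hb₀b⟩, ⟨min_le_right _ _, hsub z b₁ hyz.2 hb₁b⟩]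
  · intro u hu v hv
    have huv : (u, v) ∈ closedBall (y, z) ρ := by
      rw [← closedBall_prod_same]
      exact ⟨closedBall_subset_closedBall (min_le_left _ _) hu,
        closedBall_subset_closedBall (min_le_left _ _) hv⟩
    obtain ⟨⟨hne, hgb⟩, -⟩ := hW huv
    exact ⟨hne, ball_subset_closedBall (ball_subset_ball (half_le_self hr.le) hgb)⟩

variable (g) in
def IsSplitTree (T : List Bool → Cell X F) : Prop :=
  ∀ s, (T s).IsSplit g fun i => T (i :: s)

end Cell

open scoped Classical in
noncomputable def cantorExtension {X F : Type*} (g : X × X → F) (Φ : (ℕ → Bool) → X × F) :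
    (ℕ → Bool) × (ℕ → Bool) → F :=
  fun p => if p.1 = p.2 then (Φ p.1).2 else g ((Φ p.1).1, (Φ p.2).1)

theorem cantorExtension_diag {X F : Type*} (g : X × X → F) (Φ : (ℕ → Bool) → X × F)
    (α : ℕ → Bool) : cantorExtension g Φ (α, α) = (Φ α).2 := by
  simp [cantorExtension]

theorem cantorExtension_of_ne {X F : Type*} (g : X × X → F) (Φ : (ℕ → Bool) → X × F)
    {p : (ℕ → Bool) × (ℕ → Bool)} (hp : p.1 ≠ p.2) :
    cantorExtension g Φ p = g ((Φ p.1).1, (Φ p.2).1) := by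
  simp [cantorExtension, hp]

section SplitTree

open Cell

variable {X F : Type*} [MetricSpace X] [MetricSpace F] {g : X × X → F}
  {T : List Bool → Cell X F} {Φ : (ℕ → Bool) → X × F}

theorem radius_le_of_isSplit (hT : IsSplitTree g T) (s : List Bool) :
    (T s).radius ≤ (1 / 2) ^ s.length * (T []).radius := by
  induction s with
  | nil => simp
  | cons i s ih =>
    rw [List.length_cons, pow_succ]
    linarith [((hT s).1 i).1]

theorem vanishingDiam_of_isSplit (hT : IsSplitTree g T) :
    CantorScheme.VanishingDiam fun s => (T s).toSet := by
  intro ω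
  have hle : ∀ n,
      ediam (T (res ω n)).toSet ≤ ENNReal.ofReal (2 * ((1 / 2) ^ n * (T []).radius)) :=
    fun n => ediam_le_of_forall_dist_le fun p hp q hq => by
      have := radius_le_of_isSplit hT (res ω n)
      rw [res_length] at this
      rw [Cell.toSet, mem_closedBall] at hp hq
      linarith [dist_triangle_right p q ((T (res ω n)).point, (T (res ω n)).value)]
  have hlim : Tendsto (fun n : ℕ => ENNReal.ofReal (2 * ((1 / 2) ^ n * (T []).radius))) atTop
      (𝓝 0) := by
    rw [← ENNReal.ofReal_zero]
    apply ENNReal.tendsto_ofReal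
    simpa using ((tendsto_pow_atTop_nhds_zero_of_lt_one (by norm_num : (0 : ℝ) ≤ 1 / 2)
      (by norm_num)).mul_const (T []).radius).const_mul 2
  exact tendsto_of_tendsto_of_tendsto_of_le_of_le tendsto_const_nhds hlim (fun _ => bot_le) hle

theorem closureAntitone_of_isSplit (hT : IsSplitTree g T) :
    CantorScheme.ClosureAntitone fun s => (T s).toSet :=
  CantorScheme.Antitone.closureAntitone (fun s i => ((hT s).1 i).2) fun _ => isClosed_closedBall

theorem antitone_toSet_res (hT : IsSplitTree g T) (ω : ℕ → Bool) :
    Antitone fun n => (T (res ω n)).toSet :=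
  antitone_nat_of_succ_le fun n => by
    rw [res_succ]
    exact ((hT _).1 _).2

theorem fst_ne_and_mem_toSet_firstDiff (hT : IsSplitTree g T)
    (hsymm : ∀ x y : X, x ≠ y → g (x, y) = g (y, x)) (hΦ : ∀ ω n, Φ ω ∈ (T (res ω n)).toSet)
    {α β : ℕ → Bool} (hαβ : α ≠ β) :
    (Φ α).1 ≠ (Φ β).1 ∧
      ((Φ α).1, g ((Φ α).1, (Φ β).1)) ∈ (T (res α (firstDiff α β))).toSet := by
  set m := firstDiff α β
  have hres : res β m = res α m := res_eq_res.2 fun k hk => (apply_eq_of_lt_firstDiff hk).symm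
  have hα := Cell.mem_toSet.1 (hΦ α (m + 1))
  have hβ := Cell.mem_toSet.1 (hΦ β (m + 1))
  rw [res_succ] at hα hβ
  rw [hres] at hβ
  obtain ⟨hne, hmem⟩ := (hT (res α m)).ne_and_mem hsymm (apply_firstDiff_ne hαβ) hα.1 hβ.1
  exact ⟨hne, Cell.mem_toSet.2 ⟨(Cell.mem_toSet.1 (hΦ α m)).1, hmem⟩⟩

theorem cantorExtension_mem_image_snd (hT : IsSplitTree g T)
    (hsymm : ∀ x y : X, x ≠ y → g (x, y) = g (y, x)) (hΦ : ∀ ω n, Φ ω ∈ (T (res ω n)).toSet)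
    {ω α β : ℕ → Bool} {n : ℕ} (hα : α ∈ cylinder ω n) (hβ : β ∈ cylinder ω n) :
    cantorExtension g Φ (α, β) ∈ Prod.snd '' (T (res ω n)).toSet := by
  have hres : res α n = res ω n := by rwa [cylinder_eq_res] at hα
  by_cases h : α = β
  · subst h
    exact ⟨Φ α, hres ▸ hΦ α n, (cantorExtension_diag g Φ α).symm⟩
  · have hn : n ≤ firstDiff α β :=
      (mem_cylinder_iff_le_firstDiff h n).1 (mem_cylinder_iff_eq.2
        ((mem_cylinder_iff_eq.1 hα).trans (mem_cylinder_iff_eq.1 hβ).symm))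
    have hmem := antitone_toSet_res hT α hn (fst_ne_and_mem_toSet_firstDiff hT hsymm hΦ h).2
    simp only [hres] at hmem
    exact ⟨_, hmem, (cantorExtension_of_ne g Φ (p := (α, β)) h).symm⟩

theorem continuous_cantorExtension (hT : IsSplitTree g T)
    (hsymm : ∀ x y : X, x ≠ y → g (x, y) = g (y, x)) (hΦ : ∀ ω n, Φ ω ∈ (T (res ω n)).toSet)
    (hg : ContinuousOn g {p : X × X | p.1 ≠ p.2})
    (hΦc : Continuous Φ) : Continuous (cantorExtension g Φ) := by
  rw [continuous_iff_continuousAt]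
  rintro ⟨α, β⟩
  by_cases h : α = β
  · subst h
    rw [ContinuousAt, Metric.tendsto_nhds]
    intro ε hε
    obtain ⟨n, hn⟩ := (vanishingDiam_of_isSplit hT).dist_lt ε hε α
    have hcyl : cylinder α n ×ˢ cylinder α n ∈ 𝓝 (α, α) :=
      prod_mem_nhds ((isOpen_cylinder _ α n).mem_nhds (self_mem_cylinder α n))
        ((isOpen_cylinder _ α n).mem_nhds (self_mem_cylinder α n))
    filter_upwards [hcyl] with ⟨α', β'⟩ ⟨hα', hβ'⟩
    obtain ⟨p, hp, hp2⟩ := cantorExtension_mem_image_snd hT hsymm hΦ hα' hβ'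
    obtain ⟨q, hq, hq2⟩ := cantorExtension_mem_image_snd hT hsymm hΦ (self_mem_cylinder α n)
      (self_mem_cylinder α n)
    rw [← hp2, ← hq2]
    exact ((le_max_right _ _).trans Prod.dist_eq.ge).trans_lt (hn p hp q hq)
  · have hoff : IsOpen {p : (ℕ → Bool) × (ℕ → Bool) | p.1 ≠ p.2} :=
      isOpen_ne_fun continuous_fst continuous_snd
    have hfst : Injective fun ω => (Φ ω).1 := fun α β hαβ => by
      by_contra hne
      exact (fst_ne_and_mem_toSet_firstDiff hT hsymm hΦ hne).1 hαβ
    have hgΦ : ContinuousAt (fun p : (ℕ → Bool) × (ℕ → Bool) => g ((Φ p.1).1, (Φ p.2).1))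
        (α, β) :=
      (hg.continuousAt ((isOpen_ne_fun continuous_fst continuous_snd).mem_nhds
        (hfst.ne h))).comp (by fun_prop)
    refine hgΦ.congr ?_
    filter_upwards [hoff.mem_nhds h] with p hp
    exact (cantorExtension_of_ne g Φ hp).symm

end SplitTree

theorem exists_cantor_continuous_extension {X F : Type*} [MetricSpace X] [CompleteSpace X]
    [PerfectSpace X] [Nonempty X] [MetricSpace F] [CompactSpace F] (g : X × X → F)
    (hg : ContinuousOn g {p : X × X | p.1 ≠ p.2})
    (hsymm : ∀ x y : X, x ≠ y → g (x, y) = g (y, x)) :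
    ∃ φ : (ℕ → Bool) → X, Continuous φ ∧ Injective φ ∧
      ∃ G : (ℕ → Bool) × (ℕ → Bool) → F, Continuous G ∧
        ∀ α β, α ≠ β → G (α, β) = g (φ α, φ β) := by
  have hG : Dense {x | LowerHemicontinuousAt (clusterValues g) x} :=
    dense_of_mem_residual (eventually_residual_lowerHemicontinuousAt isClosed_graph_clusterValues)
  obtain ⟨x₀, hx₀⟩ := hG.nonempty
  obtain ⟨b₀, hb₀⟩ := clusterValues_nonempty (g := g) x₀
  obtain ⟨T, hT⟩ := exists_boolTree_of_forall_exists (Cell.IsAdmissible g) (Cell.IsSplit g)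
    (fun _ hc => Cell.exists_isSplit hg hG hc) (a₀ := ⟨x₀, b₀, 1⟩) ⟨hx₀, hb₀, one_pos⟩
  have hsplit : Cell.IsSplitTree g T := fun s => (hT s).2
  obtain ⟨Φ, hΦc, hΦ⟩ := CantorScheme.exists_continuous_forall_mem
    (vanishingDiam_of_isSplit hsplit) (closureAntitone_of_isSplit hsplit)
    fun s => nonempty_closedBall.2 (hT s).1.2.2.le
  refine ⟨fun ω => (Φ ω).1, continuous_fst.comp hΦc, fun α β hαβ => ?_,
    cantorExtension g Φ, continuous_cantorExtension hsplit hsymm hΦ hg hΦc,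
    fun α β h => cantorExtension_of_ne g Φ (p := (α, β)) h⟩
  by_contra hne
  exact (fst_ne_and_mem_toSet_firstDiff hsplit hsymm hΦ hne).1 hαβ

theorem stmt_8 (E : Type*) [TopologicalSpace E] [PolishSpace E]
    (hE : ¬ (Set.univ : Set E).Countable)
    (F : Type*) [MetricSpace F] [CompactSpace F]
    (g : E × E → F)
    (hg : ContinuousOn g {p : E × E | p.1 ≠ p.2})
    (hsymm : ∀ x y : E, x ≠ y → g (x, y) = g (y, x)) :
    ∃ Q : Set E, Q.Nonempty ∧ IsCompact Q ∧ Perfect Q ∧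
      Nonempty (Q ≃ₜ (ℕ → Bool)) ∧
      ∃ ghat : E × E → F, ContinuousOn ghat (Q ×ˢ Q) ∧
        ∀ x ∈ Q, ∀ y ∈ Q, x ≠ y → ghat (x, y) = g (x, y) := by
  let := TopologicalSpace.upgradeIsCompletelyMetrizable E
  obtain ⟨P, hP, hPne, -⟩ :=
    exists_perfect_nonempty_of_isClosed_of_not_countable isClosed_univ hE
  have : CompleteSpace P := hP.closed.completeSpace_coe
  have : PerfectSpace P := hP.acc.perfectSpace_coe
  have : Nonempty P := hPne.to_subtype
  obtain ⟨φ, hφ, hinj, G, hG, hGg⟩ := exists_cantor_continuous_extension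
    (fun p : P × P => g (p.1, p.2))
    (hg.comp (by fun_prop : Continuous fun p : P × P => ((p.1 : E), (p.2 : E))).continuousOn
      fun p hp h => hp (Subtype.ext h))
    fun x y h => hsymm x y (Subtype.coe_ne_coe.2 h)
  have hφE : Continuous (Subtype.val ∘ φ) := continuous_subtype_val.comp hφ
  have hinjE : Injective (Subtype.val ∘ φ) := Subtype.val_injective.comp hinj
  exact ⟨range (Subtype.val ∘ φ), range_nonempty _, isCompact_range hφE,
    ⟨(isCompact_range hφE).isClosed, preperfect_range hφE hinjE⟩,
    ⟨(hφE.isClosedEmbedding hinjE).isEmbedding.toHomeomorph.symm⟩,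
    exists_continuousOn_extension_of_cantor hφE hinjE hG hGg⟩
end

section
/- For every ε > 0 and every uncountable closed set P ⊆ ℝⁿ (n ≥ 1), there is a perfect set T ⊆ P which is ε-directed. -/
/-!
Pass to a nonempty perfect kernel of `P` and cover the unit sphere by finitely many balls
`B(vᵢ, ε)`. For one direction `v`, either pairs whose direction is `ε`-close to `±v` occur inside
every nonempty relatively open piece of the current perfect set, and then a Cantor scheme of
closed balls, in which the two children of every node are joined only by such pairs, yields a
perfect `ε`-directed subset; or some open piece contains no such pair, and its closure is a
smaller perfect set with no pair in direction `v` at all. Running through the `vᵢ`, the second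
alternative cannot occur for all of them, since any two distinct points have their direction in
some `B(vᵢ, ε)`.
-/

open Set Function Metric Filter PiNat CantorScheme

lemma perfect_range_of_continuous_injective {α : Type*} [TopologicalSpace α] [T2Space α]
    {f : (ℕ → Bool) → α} (hf : Continuous f) (hinj : Injective f) : Perfect (range f) := by
  refine ⟨(isCompact_range hf).isClosed, preperfect_iff_nhds.2 ?_⟩
  rintro _ ⟨σ, rfl⟩ U hU
  obtain ⟨_, ⟨σ', n, rfl⟩, hσ, hsub⟩ :=
    (isTopologicalBasis_cylinders _).mem_nhds_iff.1 (hf.continuousAt hU)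
  have hτ : update σ n (!σ n) ∈ cylinder σ' n :=
    mem_cylinder_iff_eq.1 hσ ▸ update_mem_cylinder σ n _
  refine ⟨f (update σ n (!σ n)), ⟨hsub hτ, mem_range_self _⟩, hinj.ne fun h => ?_⟩
  simpa using congrFun h n

lemma Perfect.dense_pairs_or_exists_disjoint {X : Type*} [TopologicalSpace X] {S : Set (X × X)}
    (hS : IsOpen S) {C : Set X} (hC : Perfect C) :
    (∀ U, IsOpen U → (C ∩ U).Nonempty → ¬Disjoint ((C ∩ U) ×ˢ (C ∩ U)) S) ∨
      ∃ C' ⊆ C, Perfect C' ∧ C'.Nonempty ∧ Disjoint (C' ×ˢ C') S := by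
  refine or_iff_not_imp_left.2 fun h => ?_
  push Not at h
  obtain ⟨U, hU, ⟨x, hxC, hxU⟩, hdisj⟩ := h
  obtain ⟨hperf, hne⟩ := hC.closure_nhds_inter x hxC hxU hU
  refine ⟨closure (U ∩ C), closure_minimal inter_subset_right hC.closed, hperf, hne, ?_⟩
  rw [← closure_prod_eq, inter_comm]
  exact hdisj.closure_left hS

section MetricSpace

variable {α : Type*} [MetricSpace α] {S : Set (α × α)}

theorem exists_perfect_of_cantorScheme [CompleteSpace α] {D : List Bool → Set α}
    (hanti : ClosureAntitone D) (hdiam : VanishingDiam D) (hne : ∀ l, (D l).Nonempty)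
    (hpairs : ∀ l, D (true :: l) ×ˢ D (false :: l) ⊆ S) (hdiag : ∀ x, (x, x) ∉ S) :
    ∃ T ⊆ D [], Perfect T ∧ T.Nonempty ∧ ∀ x ∈ T, ∀ y ∈ T, x ≠ y → (x, y) ∈ S ∨ (y, x) ∈ S := by
  have hdom : ∀ σ, σ ∈ (inducedMap D).1 := by
    simp [hanti.map_of_vanishingDiam hdiam hne]
  set f : (ℕ → Bool) → α := fun σ => (inducedMap D).2 ⟨σ, hdom σ⟩
  have hf_mem : ∀ σ n, f σ ∈ D (res σ n) := fun σ n => map_mem _ n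
  have hdisj : CantorScheme.Disjoint D := by
    have hsiblings : ∀ l, Disjoint (D (true :: l)) (D (false :: l)) := fun l =>
      disjoint_left.2 fun x h₁ h₂ => hdiag x (hpairs l (mk_mem_prod h₁ h₂))
    rintro l (_ | _) (_ | _) hab <;>
      first | exact absurd rfl hab | exact hsiblings l | exact (hsiblings l).symm
  have hinj : Injective f := fun σ τ h => congrArg Subtype.val (hdisj.map_injective h)
  have hcont : Continuous f := hdiam.map_continuous.comp (continuous_id.subtype_mk _)
  refine ⟨range f, range_subset_iff.2 fun σ => hf_mem σ 0,
    perfect_range_of_continuous_injective hcont hinj, range_nonempty f, ?_⟩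
  rintro _ ⟨σ, rfl⟩ _ ⟨τ, rfl⟩ hfστ
  have hστ : σ ≠ τ := fun h => hfστ (h ▸ rfl)
  -- `f σ` and `f τ` lie in the two different children of the node `res σ k`.
  set k := firstDiff σ τ
  have hres : res τ k = res σ k := res_eq_res.2 fun i hi => (apply_eq_of_lt_firstDiff hi).symm
  have hσ := hf_mem σ (k + 1)
  have hτ := hf_mem τ (k + 1)
  rw [res_succ] at hσ hτ
  rw [hres] at hτ
  have hk : σ k ≠ τ k := apply_firstDiff_ne hστ
  cases hσk : σ k <;> cases hτk : τ k <;> rw [hσk] at hσ hk <;> rw [hτk] at hτ hk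
  · exact absurd rfl hk
  · exact Or.inr (hpairs _ (mk_mem_prod hτ hσ))
  · exact Or.inl (hpairs _ (mk_mem_prod hσ hτ))
  · exact absurd rfl hk

lemma exists_closedBall_pairs_subset (hS : IsOpen S) {Z : Set α}
    (hdense : ∀ U, IsOpen U → (Z ∩ U).Nonempty → ¬Disjoint ((Z ∩ U) ×ˢ (Z ∩ U)) S)
    {c : α} (hc : c ∈ Z) {r : ℝ} (hr : 0 < r) :
    ∃ y z r', y ∈ Z ∧ z ∈ Z ∧ 0 < r' ∧ r' ≤ r / 2 ∧ closedBall y r' ⊆ closedBall c r ∧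
      closedBall z r' ⊆ closedBall c r ∧ closedBall y r' ×ˢ closedBall z r' ⊆ S := by
  obtain ⟨⟨y, z⟩, ⟨⟨hyZ, hy⟩, hzZ, hz⟩, hyzS⟩ := not_disjoint_iff_nonempty_inter.1
    (hdense (ball c (r / 2)) isOpen_ball ⟨c, hc, mem_ball_self (by positivity)⟩)
  obtain ⟨ρ, hρ, hρS⟩ := Metric.isOpen_iff.1 hS _ hyzS
  have hsub : ∀ {w}, w ∈ ball c (r / 2) → closedBall w (min (ρ / 2) (r / 2)) ⊆ closedBall c r :=
    fun hw => closedBall_subset_closedBall' <| by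
      linarith [min_le_right (ρ / 2) (r / 2), mem_ball.1 hw]
  refine ⟨y, z, min (ρ / 2) (r / 2), hyZ, hzZ, by positivity, min_le_right _ _, hsub hy, hsub hz,
    ?_⟩
  rw [closedBall_prod_same]
  exact (closedBall_subset_ball (by linarith [min_le_left (ρ / 2) (r / 2)])).trans hρS

theorem exists_perfect_of_dense_pairs [CompleteSpace α] (hS : IsOpen S)
    (hdiag : ∀ x, (x, x) ∉ S) {Z : Set α} (hZ : IsClosed Z) (hZne : Z.Nonempty)
    (hdense : ∀ U, IsOpen U → (Z ∩ U).Nonempty → ¬Disjoint ((Z ∩ U) ×ˢ (Z ∩ U)) S) :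
    ∃ T ⊆ Z, Perfect T ∧ T.Nonempty ∧ ∀ x ∈ T, ∀ y ∈ T, x ≠ y → (x, y) ∈ S ∨ (y, x) ∈ S := by
  obtain ⟨c₀, hc₀⟩ := hZne
  choose! y z r' hy hz hr' hr'le hysub hzsub hprod using
    fun (c : α) (hc : c ∈ Z) (r : ℝ) (hr : 0 < r) =>
      exists_closedBall_pairs_subset hS hdense hc hr
  let node (l : List Bool) : α × ℝ :=
    l.foldr (fun b p => (cond b (y p.1 p.2) (z p.1 p.2), r' p.1 p.2)) (c₀, 1)
  have hnode : ∀ l, (node l).1 ∈ Z ∧ 0 < (node l).2 ∧ (node l).2 ≤ (1 / 2) ^ l.length := by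
    intro l
    induction l with
    | nil => simp [node, hc₀]
    | cons b l ih =>
      obtain ⟨hcZ, hrpos, hrle⟩ := ih
      refine ⟨?_, hr' _ hcZ _ hrpos, ?_⟩
      · cases b
        exacts [hz _ hcZ _ hrpos, hy _ hcZ _ hrpos]
      · rw [List.length_cons, pow_succ]
        exact (hr'le _ hcZ _ hrpos).trans (by linarith)
  let D (l : List Bool) : Set α := Z ∩ closedBall (node l).1 (node l).2
  have hchild : ∀ b l, closedBall (node (b :: l)).1 (node (b :: l)).2 ⊆
      closedBall (node l).1 (node l).2 := fun b l => by
    obtain ⟨hcZ, hrpos, -⟩ := hnode l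
    cases b
    exacts [hzsub _ hcZ _ hrpos, hysub _ hcZ _ hrpos]
  have hdiam : VanishingDiam D := by
    intro σ
    refine tendsto_of_tendsto_of_tendsto_of_le_of_le tendsto_const_nhds
      (h := fun n => ENNReal.ofReal (2 * (1 / 2) ^ n)) ?_ (fun _ => zero_le) fun n => ?_
    · have hpow := tendsto_pow_atTop_nhds_zero_of_lt_one (r := (1 / 2 : ℝ)) (by norm_num)
        (by norm_num)
      simpa using ENNReal.tendsto_ofReal (hpow.const_mul 2)
    · refine ediam_le_of_forall_dist_le fun a ha b hb => ?_
      have hr := (hnode (res σ n)).2.2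
      rw [res_length] at hr
      linarith [dist_triangle_right a b (node (res σ n)).1, mem_closedBall.1 ha.2,
        mem_closedBall.1 hb.2]
  refine (exists_perfect_of_cantorScheme (D := D)
    (CantorScheme.Antitone.closureAntitone (fun l b => inter_subset_inter_right Z (hchild b l))
      fun l => hZ.inter isClosed_closedBall)
    hdiam (fun l => ⟨_, (hnode l).1, mem_closedBall_self (hnode l).2.1.le⟩) (fun l => ?_)
    hdiag).imp fun T hT => ⟨hT.1.trans inter_subset_left, hT.2⟩
  obtain ⟨hcZ, hrpos, -⟩ := hnode l
  exact (prod_mono inter_subset_right inter_subset_right).trans (hprod _ hcZ _ hrpos)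

end MetricSpace

section NormedSpace

variable {E : Type*} [NormedAddCommGroup E] [NormedSpace ℝ E]

def directedPairs (v : E) (ε : ℝ) : Set (E × E) :=
  {p | p.1 ≠ p.2 ∧
    (‖‖p.1 - p.2‖⁻¹ • (p.1 - p.2) - v‖ < ε ∨ ‖‖p.1 - p.2‖⁻¹ • (p.1 - p.2) + v‖ < ε)}

lemma isOpen_directedPairs (v : E) (ε : ℝ) : IsOpen (directedPairs v ε) := by
  have hdir : ContinuousOn (fun p : E × E => ‖p.1 - p.2‖⁻¹ • (p.1 - p.2)) {p | p.1 ≠ p.2} :=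
    ((continuous_fst.sub continuous_snd).norm.continuousOn.inv₀ fun p hp =>
      norm_ne_zero_iff.2 (sub_ne_zero.2 hp)).smul
        (continuous_fst.sub continuous_snd).continuousOn
  convert hdir.isOpen_inter_preimage (isOpen_ne_fun continuous_fst continuous_snd)
    ((isOpen_ball (x := v) (ε := ε)).union (isOpen_ball (x := -v) (ε := ε))) using 1
  ext p
  simp [directedPairs, dist_eq_norm]

lemma swap_mem_directedPairs {v : E} {ε : ℝ} {x y : E} (h : (x, y) ∈ directedPairs v ε) :
    (y, x) ∈ directedPairs v ε := by
  obtain ⟨hxy, hdir⟩ := h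
  have hneg : ‖y - x‖⁻¹ • (y - x) = -(‖x - y‖⁻¹ • (x - y)) := by
    rw [← neg_sub x y, norm_neg, smul_neg]
  refine ⟨hxy.symm, ?_⟩
  dsimp only at hdir ⊢
  rw [hneg, neg_sub_left, norm_neg, add_comm v, neg_add_eq_sub, norm_sub_rev v]
  exact hdir.symm

lemma exists_mem_directedPairs {V : Finset E} {ε : ℝ} (hV : sphere 0 1 ⊆ ⋃ v ∈ V, ball v ε)
    {x y : E} (hxy : x ≠ y) : ∃ v ∈ V, (x, y) ∈ directedPairs v ε := by
  have hunit : ‖x - y‖⁻¹ • (x - y) ∈ sphere (0 : E) 1 := by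
    rw [mem_sphere_zero_iff_norm, norm_smul, norm_inv, norm_norm,
      inv_mul_cancel₀ (norm_ne_zero_iff.2 (sub_ne_zero.2 hxy))]
  obtain ⟨v, hv, hball⟩ := mem_iUnion₂.1 (hV hunit)
  exact ⟨v, hv, hxy, Or.inl (by rwa [mem_ball, dist_eq_norm] at hball)⟩

lemma Perfect.exists_directed_or_disjoint [CompleteSpace E] (V : Finset E) (ε : ℝ) {C : Set E}
    (hC : Perfect C) (hCne : C.Nonempty) :
    (∃ T ⊆ C, Perfect T ∧ T.Nonempty ∧
        ∃ v ∈ V, ∀ x ∈ T, ∀ y ∈ T, x ≠ y → (x, y) ∈ directedPairs v ε) ∨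
      ∃ C' ⊆ C, Perfect C' ∧ C'.Nonempty ∧ ∀ v ∈ V, Disjoint (C' ×ˢ C') (directedPairs v ε) := by
  classical
  induction V using Finset.induction_on with
  | empty => exact Or.inr ⟨C, subset_rfl, hC, hCne, by simp⟩
  | insert v₀ V _ ih =>
    rcases ih with ⟨T, hTC, hT, hTne, v, hv, hdir⟩ | ⟨C', hC'C, hC', hC'ne, hdisj⟩
    · exact Or.inl ⟨T, hTC, hT, hTne, v, Finset.mem_insert_of_mem hv, hdir⟩
    rcases hC'.dense_pairs_or_exists_disjoint (isOpen_directedPairs v₀ ε) with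
      hdense | ⟨C'', hC''C', hC'', hC''ne, hdisj₀⟩
    · obtain ⟨T, hTC', hT, hTne, hdir⟩ := exists_perfect_of_dense_pairs
        (isOpen_directedPairs v₀ ε) (fun x hx => hx.1 rfl) hC'.closed hC'ne hdense
      refine Or.inl ⟨T, hTC'.trans hC'C, hT, hTne, v₀, Finset.mem_insert_self v₀ V,
        fun x hx y hy hxy => ?_⟩
      exact (hdir x hx y hy hxy).elim id swap_mem_directedPairs
    · refine Or.inr ⟨C'', hC''C'.trans hC'C, hC'', hC''ne, ?_⟩
      rw [Finset.forall_mem_insert]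
      exact ⟨hdisj₀, fun v hv => (hdisj v hv).mono_left (prod_mono hC''C' hC''C')⟩

theorem Perfect.exists_perfect_directed [FiniteDimensional ℝ E] {ε : ℝ} (hε : 0 < ε)
    {C : Set E} (hC : Perfect C) (hCne : C.Nonempty) :
    ∃ T ⊆ C, Perfect T ∧ T.Nonempty ∧
      ∃ v : E, ‖v‖ = 1 ∧ ∀ x ∈ T, ∀ y ∈ T, x ≠ y → (x, y) ∈ directedPairs v ε := by
  obtain ⟨V, hVsphere, hVcover⟩ := (isCompact_sphere (0 : E) 1).elim_nhds_subcover
    (fun v => ball v ε) fun v _ => ball_mem_nhds v hε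
  rcases hC.exists_directed_or_disjoint V ε hCne with
    ⟨T, hTC, hT, hTne, v, hv, hdir⟩ | ⟨C', -, hC', ⟨x, hx⟩, hdisj⟩
  · exact ⟨T, hTC, hT, hTne, v, mem_sphere_zero_iff_norm.1 (hVsphere v hv), hdir⟩
  obtain ⟨y, ⟨-, hy⟩, hyx⟩ := accPt_iff_nhds.1 (hC'.acc x hx) univ univ_mem
  obtain ⟨v, hv, hdir⟩ := exists_mem_directedPairs hVcover hyx
  exact (disjoint_left.1 (hdisj v hv) (mk_mem_prod hy hx) hdir).elim

end NormedSpace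

theorem stmt_9_general (n : ℕ) (ε : ℝ) (hε : 0 < ε)
    (P : Set (EuclideanSpace ℝ (Fin n))) (hPclosed : IsClosed P)
    (hPunc : ¬ P.Countable) :
    ∃ T ⊆ P, Perfect T ∧ T.Nonempty ∧
      ∃ v : EuclideanSpace ℝ (Fin n), ‖v‖ = 1 ∧
        ∀ x ∈ T, ∀ y ∈ T, x ≠ y →
          ‖‖x - y‖⁻¹ • (x - y) - v‖ ≤ ε ∨ ‖‖x - y‖⁻¹ • (x - y) + v‖ ≤ ε := by
  obtain ⟨C, hC, hCne, hCP⟩ := exists_perfect_nonempty_of_isClosed_of_not_countable hPclosed hPunc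
  obtain ⟨T, hTC, hT, hTne, v, hv, hdir⟩ := hC.exists_perfect_directed hε hCne
  exact ⟨T, hTC.trans hCP, hT, hTne, v, hv, fun x hx y hy hxy =>
    (hdir x hx y hy hxy).2.imp le_of_lt le_of_lt⟩

theorem stmt_9 (n : ℕ) (hn : 1 ≤ n) (ε : ℝ) (hε : 0 < ε)
    (P : Set (EuclideanSpace ℝ (Fin n))) (hPclosed : IsClosed P)
    (hPunc : ¬ P.Countable) :
    ∃ T ⊆ P, Perfect T ∧ T.Nonempty ∧
      ∃ v : EuclideanSpace ℝ (Fin n), ‖v‖ = 1 ∧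
        ∀ x ∈ T, ∀ y ∈ T, x ≠ y →
          ‖‖x - y‖⁻¹ • (x - y) - v‖ ≤ ε ∨ ‖‖x - y‖⁻¹ • (x - y) + v‖ ≤ ε :=
  stmt_9_general n ε hε P hPclosed hPunc
end

section
/- Let D ⊆ ℝ be a Cantor set and f ∈ C^∞(ℝ) strictly increasing with f' ≥ 0 everywhere and D = {x : f'(x) = 0}. Let P be the graph of f restricted to D, i.e. P = {(x, f(x)) : x ∈ D}. Then every non-squiggly subset of P is countable. -/
open Set

private lemma ncard_four' {α : Type*} {a b c d : α}
    (h1 : a ≠ b) (h2 : a ≠ c) (h3 : a ≠ d) (h4 : b ≠ c) (h5 : b ≠ d) (h6 : c ≠ d) :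
    ({a, b, c, d} : Set α).ncard = 4 := by
  rw [Set.ncard_insert_of_notMem (by simp [h1, h2, h3]) (Set.toFinite _),
      Set.ncard_insert_of_notMem (by simp [h4, h5]) (Set.toFinite _),
      Set.ncard_insert_of_notMem (by simp [h6]) (Set.toFinite _),
      Set.ncard_singleton]

private lemma countable_bad_left (E : Set ℝ) :
    {y | y ∈ E ∧ ∃ l, l < y ∧ E ∩ Set.Ioo l y = ∅}.Countable := by
  classical
  set S := {y | y ∈ E ∧ ∃ l, l < y ∧ E ∩ Set.Ioo l y = ∅} with hS
  have hq : ∀ y ∈ S, ∃ q : ℚ, (q : ℝ) < y ∧ E ∩ Set.Ioo (q : ℝ) y = ∅ := by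
    rintro y ⟨hyE, l, hl, hem⟩
    obtain ⟨q, hq1, hq2⟩ := exists_rat_btwn hl
    refine ⟨q, hq2, Set.eq_empty_of_subset_empty ?_⟩
    rw [← hem]
    exact fun w hw => ⟨hw.1, lt_trans hq1 hw.2.1, hw.2.2⟩
  choose! g hg1 hg2 using hq
  have hinj : Set.InjOn g S := by
    intro y1 h1 y2 h2 he
    by_contra hne
    rcases lt_or_gt_of_ne hne with h | h
    · have : y1 ∈ E ∩ Set.Ioo ((g y2 : ℚ) : ℝ) y2 :=
        ⟨h1.1, by rw [← he]; exact hg1 y1 h1, h⟩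
      rw [hg2 y2 h2] at this; exact this
    · have : y2 ∈ E ∩ Set.Ioo ((g y1 : ℚ) : ℝ) y1 :=
        ⟨h2.1, by rw [he]; exact hg1 y2 h2, h⟩
      rw [hg2 y1 h1] at this; exact this
  exact Set.countable_of_injective_of_countable_image hinj (Set.to_countable _)

private lemma countable_bad_right (E : Set ℝ) :
    {y | y ∈ E ∧ ∃ u, y < u ∧ E ∩ Set.Ioo y u = ∅}.Countable := by
  classical
  set S := {y | y ∈ E ∧ ∃ u, y < u ∧ E ∩ Set.Ioo y u = ∅} with hS
  have hq : ∀ y ∈ S, ∃ q : ℚ, y < (q : ℝ) ∧ E ∩ Set.Ioo y (q : ℝ) = ∅ := by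
    rintro y ⟨hyE, u, hu, hem⟩
    obtain ⟨q, hq1, hq2⟩ := exists_rat_btwn hu
    refine ⟨q, hq1, Set.eq_empty_of_subset_empty ?_⟩
    rw [← hem]
    exact fun w hw => ⟨hw.1, hw.2.1, lt_trans hw.2.2 hq2⟩
  choose! g hg1 hg2 using hq
  have hinj : Set.InjOn g S := by
    intro y1 h1 y2 h2 he
    by_contra hne
    rcases lt_or_gt_of_ne hne with h | h
    · have : y2 ∈ E ∩ Set.Ioo y1 ((g y1 : ℚ) : ℝ) :=
        ⟨h2.1, h, by rw [he]; exact hg1 y2 h2⟩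
      rw [hg2 y1 h1] at this; exact this
    · have : y1 ∈ E ∩ Set.Ioo y2 ((g y2 : ℚ) : ℝ) :=
        ⟨h1.1, h, by rw [← he]; exact hg1 y1 h1⟩
      rw [hg2 y2 h2] at this; exact this
  exact Set.countable_of_injective_of_countable_image hinj (Set.to_countable _)

/-- `A ⊆ ℝ²` is non-squiggly: for some `δ ∈ (0,∞]`, whenever four distinct points
of `A` have diameter at most `δ`, none of them is interior to the triangle spanned
by the other three. -/
def NonSquiggly (A : Set (ℝ × ℝ)) : Prop :=
  ∃ δ : ENNReal, 0 < δ ∧ ∀ x ∈ A, ∀ y ∈ A, ∀ z ∈ A, ∀ t ∈ A,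
    ({x, y, z, t} : Set (ℝ × ℝ)).ncard = 4 →
    EMetric.diam ({x, y, z, t} : Set (ℝ × ℝ)) ≤ δ →
    t ∉ interior (convexHull ℝ ({x, y, z} : Set (ℝ × ℝ)))


set_option maxHeartbeats 2000000 in
theorem stmt_13 (D : Set ℝ) (hDne : D.Nonempty) (hDcomp : IsCompact D)
    (hDperf : Perfect D) (hDnd : interior D = ∅)
    (f : ℝ → ℝ) (hf : ContDiff ℝ (⊤ : ℕ∞) f) (hmono : StrictMono f)
    (hderiv : ∀ x, 0 ≤ deriv f x) (hzero : {x : ℝ | deriv f x = 0} = D) :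
    ∀ A ⊆ {p : ℝ × ℝ | p.1 ∈ D ∧ p.2 = f p.1}, NonSquiggly A → A.Countable := by
  intro A hA hNS
  by_contra hAunc
  obtain ⟨δ, hδ, hns⟩ := hNS
  obtain ⟨η, hη, hηδ⟩ : ∃ η : ℝ, 0 < η ∧ ENNReal.ofReal η ≤ δ := by
    rcases eq_or_ne δ ⊤ with h | h
    · exact ⟨1, one_pos, by simp [h]⟩
    · exact ⟨δ.toReal, ENNReal.toReal_pos hδ.ne' h, by rw [ENNReal.ofReal_toReal h]⟩
  set E := Prod.fst '' A with hE
  have hEsub : E ⊆ D := by rintro _ ⟨p, hp, rfl⟩; exact (hA hp).1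
  have hgraph : ∀ p ∈ A, p = (p.1, f p.1) := fun p hp => Prod.ext rfl (hA hp).2
  have hEunc : ¬ E.Countable := by
    intro hc
    refine hAunc (((hc.image (fun x => (x, f x))).mono ?_))
    intro p hp
    exact ⟨p.1, ⟨p, hp, rfl⟩, (hgraph p hp).symm⟩
  have hmemA : ∀ x ∈ E, (x, f x) ∈ A := by
    rintro _ ⟨p, hp, rfl⟩; rw [← hgraph p hp]; exact hp
  -- find a two-sided accumulation point y of E inside E
  have hcnt := (countable_bad_left E).union (countable_bad_right E)
  obtain ⟨y, hyE, hy⟩ : ∃ y ∈ E, y ∉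
      ({y | y ∈ E ∧ ∃ l, l < y ∧ E ∩ Set.Ioo l y = ∅} ∪
       {y | y ∈ E ∧ ∃ u, y < u ∧ E ∩ Set.Ioo y u = ∅}) := by
    by_contra h
    push_neg at h
    exact hEunc (hcnt.mono h)
  have hyL : ∀ l < y, (E ∩ Set.Ioo l y).Nonempty := by
    intro l hl
    rw [Set.nonempty_iff_ne_empty]
    intro hem
    exact hy (Or.inl ⟨hyE, l, hl, hem⟩)
  have hyR : ∀ u, y < u → (E ∩ Set.Ioo y u).Nonempty := by
    intro u hu
    rw [Set.nonempty_iff_ne_empty]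
    intro hem
    exact hy (Or.inr ⟨hyE, u, hu, hem⟩)
  -- derivative of f at y is 0
  have hyD : y ∈ D := hEsub hyE
  have hdy : deriv f y = 0 := by rw [← hzero] at hyD; exact hyD
  have hder : HasDerivAt f 0 y := by
    have := (hf.differentiable (by simp) y).hasDerivAt
    rwa [hdy] at this
  have hslope := hasDerivAt_iff_tendsto_slope.mp hder
  have key : ∀ ε : ℝ, 0 < ε → ∃ l < y, ∀ w ∈ Set.Ioo l y, f y - f w < ε * (y - w) := by
    intro ε hε
    have h1 : {w | slope f y w < ε} ∈ nhdsWithin y {y}ᶜ :=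
      hslope (Iio_mem_nhds hε)
    have h2 : {w | slope f y w < ε} ∈ nhdsWithin y (Set.Iio y) :=
      nhdsWithin_mono y (fun w hw => ne_of_lt hw) h1
    obtain ⟨l, hl, hsub⟩ := mem_nhdsLT_iff_exists_Ioo_subset.mp h2
    refine ⟨l, hl, fun w hw => ?_⟩
    have hs : slope f y w < ε := hsub hw
    rw [slope_def_field] at hs
    have hwy : w - y < 0 := by linarith [hw.2]
    have : (f y - f w) / (y - w) < ε := by
      rw [show (f y - f w) / (y - w) = (f w - f y) / (w - y) by
        rw [← neg_sub (f w) (f y), ← neg_sub w y, neg_div_neg_eq]]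
      exact hs
    have hyw : (0:ℝ) < y - w := by linarith [hw.2]
    exact (div_lt_iff₀ hyw).mp this
  -- continuity bound
  obtain ⟨r1, hr1, hr1f⟩ := Metric.continuousAt_iff.mp hf.continuous.continuousAt (η/2)
    (by positivity)
  have hminpos : 0 < min r1 (η/2) := lt_min hr1 (by positivity)
  -- choose z to the right
  obtain ⟨z, hzE, hzy, hzu⟩ : ∃ z ∈ E, y < z ∧ z < y + min r1 (η/2) := by
    obtain ⟨z, hz1, hz2⟩ := hyR (y + min r1 (η/2)) (by linarith)
    exact ⟨z, hz1, hz2.1, hz2.2⟩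
  have hfyz : f y < f z := hmono hzy
  have hfzη : f z - f y < η/2 := by
    have : dist z y < r1 := by
      rw [Real.dist_eq, abs_of_pos (by linarith : (0:ℝ) < z - y)]
      have := min_le_left r1 (η/2); linarith
    have := hr1f this
    rw [Real.dist_eq] at this
    calc f z - f y ≤ |f z - f y| := le_abs_self _
      _ < η/2 := this
  -- choose x to the left with small slope
  obtain ⟨lc, hlc, hlcs⟩ := key ((f z - f y) / (z - y)) (div_pos (by linarith) (by linarith))
  obtain ⟨x, hxE, hx⟩ := hyL (max lc (y - min r1 (η/2)))
    (max_lt hlc (by linarith))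
  have hxy : x < y := hx.2
  have hfxy : f x < f y := hmono hxy
  have hxr : y - x < min r1 (η/2) := by
    have h1 := hx.1; have := le_max_right lc (y - min r1 (η/2)); linarith
  have hfxη : f y - f x < η/2 := by
    have : dist x y < r1 := by
      rw [Real.dist_eq, abs_of_neg (by linarith : x - y < 0)]
      have := min_le_left r1 (η/2); linarith
    have := hr1f this
    rw [Real.dist_eq] at this
    calc f y - f x ≤ |f x - f y| := by rw [abs_sub_comm]; exact le_abs_self _
      _ < η/2 := this
  -- slope(x,y) < slope(y,z), cross-multiplied
  have Hx : f y - f x < (f z - f y) / (z - y) * (y - x) :=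
    hlcs x ⟨lt_of_le_of_lt (le_max_left _ _) hx.1, hxy⟩
  have H2' : (f y - f x) * (z - y) < (f z - f y) * (y - x) := by
    have hzy' : (0:ℝ) < z - y := by linarith
    calc (f y - f x) * (z - y) < (f z - f y) / (z - y) * (y - x) * (z - y) := by
          apply mul_lt_mul_of_pos_right Hx hzy'
      _ = (f z - f y) * (y - x) := by field_simp; try ring
  have H2 : (f y - f x) * (z - x) < (f z - f x) * (y - x) := by
    have e2 : (f y - f x) * (z - x) = (f y - f x) * (z - y) + (f y - f x) * (y - x) := by ring
    have e3 : (f z - f x) * (y - x) = (f z - f y) * (y - x) + (f y - f x) * (y - x) := by ring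
    linarith [H2', e2, e3]
  -- choose t
  have hfzx : (0:ℝ) < f z - f x := by linarith
  set θ : ℝ := x + (f y - f x) * (z - x) / (f z - f x) with hθdef
  have hθy : θ < y := by
    rw [hθdef]
    have : (f y - f x) * (z - x) / (f z - f x) < y - x := by
      rw [div_lt_iff₀ hfzx]
      linarith [H2, mul_comm (y - x) (f z - f x)]
    linarith
  obtain ⟨lb, hlb, hlbs⟩ := key ((f y - f x) / (y - x))
    (div_pos (by linarith) (by linarith))
  obtain ⟨t, htE, ht⟩ := hyL (max (max x θ) (max lb lc))
    (max_lt (max_lt hxy hθy) (max_lt hlb hlc))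
  have hty : t < y := ht.2
  have hxt : x < t :=
    lt_of_le_of_lt (le_trans (le_max_left x θ) (le_max_left _ _)) ht.1
  have hθt : θ < t :=
    lt_of_le_of_lt (le_trans (le_max_right x θ) (le_max_left _ _)) ht.1
  have htlb : lb < t :=
    lt_of_le_of_lt (le_trans (le_max_left lb lc) (le_max_right _ _)) ht.1
  have htlc : lc < t :=
    lt_of_le_of_lt (le_trans (le_max_right lb lc) (le_max_right _ _)) ht.1
  have hfty : f t < f y := hmono hty
  have hfxt : f x < f t := hmono hxt
  have hftz : f t < f z := hmono (lt_trans hty hzy)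
  -- the four cross-multiplied inequalities
  have Ht1 : f y - f t < (f y - f x) / (y - x) * (y - t) := hlbs t ⟨htlb, hty⟩
  have Ht2 : f y - f t < (f z - f y) / (z - y) * (y - t) := hlcs t ⟨htlc, hty⟩
  have H1 : (f y - f t) * (y - x) < (f y - f x) * (y - t) := by
    have hyx' : (0:ℝ) < y - x := by linarith
    calc (f y - f t) * (y - x) < (f y - f x) / (y - x) * (y - t) * (y - x) := by
          apply mul_lt_mul_of_pos_right Ht1 hyx'
      _ = (f y - f x) * (y - t) := by field_simp; try ring
  have H4 : (f y - f t) * (z - y) < (f z - f y) * (y - t) := by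
    have hzy' : (0:ℝ) < z - y := by linarith
    calc (f y - f t) * (z - y) < (f z - f y) / (z - y) * (y - t) * (z - y) := by
          apply mul_lt_mul_of_pos_right Ht2 hzy'
      _ = (f z - f y) * (y - t) := by field_simp; try ring
  have H3 : (f y - f x) * (z - x) < (f z - f x) * (t - x) := by
    have : (f y - f x) * (z - x) / (f z - f x) < t - x := by
      have h' := hθt; rw [hθdef] at h'; linarith
    calc (f y - f x) * (z - x) = (f y - f x) * (z - x) / (f z - f x) * (f z - f x) := by
          field_simp
      _ < (t - x) * (f z - f x) := mul_lt_mul_of_pos_right this hfzx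
      _ = (f z - f x) * (t - x) := by ring
  -- barycentric data
  set N0 : ℝ := (y - t) * (f z - f y) - (f y - f t) * (z - y) with hN0def
  set N1 : ℝ := (t - x) * (f z - f x) - (f t - f x) * (z - x) with hN1def
  set N2 : ℝ := (y - x) * (f t - f x) - (f y - f x) * (t - x) with hN2def
  set T : ℝ := (y - x) * (f z - f x) - (f y - f x) * (z - x) with hTdef
  have hT : 0 < T := by rw [hTdef]; linarith [H2, mul_comm (y - x) (f z - f x)]
  have hN0 : 0 < N0 := by rw [hN0def]; linarith [H4, mul_comm (y - t) (f z - f y)]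
  have hN1 : 0 < N1 := by
    rw [hN1def]
    have h' : (f t - f x) * (z - x) < (f y - f x) * (z - x) :=
      mul_lt_mul_of_pos_right (by linarith) (by linarith)
    linarith [H3, h', mul_comm (t - x) (f z - f x)]
  have hN2 : 0 < N2 := by
    rw [hN2def]
    have e : (y - x) * (f t - f x) - (f y - f x) * (t - x)
        = (f y - f x) * (y - t) - (f y - f t) * (y - x) := by ring
    linarith [H1, e]
  have hsumN : N0 + N1 + N2 = T := by rw [hN0def, hN1def, hN2def, hTdef]; ring
  -- the four points
  set Px : ℝ × ℝ := (x, f x) with hPx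
  set Py : ℝ × ℝ := (y, f y) with hPy
  set Pz : ℝ × ℝ := (z, f z) with hPz
  set Pt : ℝ × ℝ := (t, f t) with hPt
  set v : Fin 3 → ℝ × ℝ := ![Px, Py, Pz] with hv
  set w : Fin 3 → ℝ := ![N0 / T, N1 / T, N2 / T] with hw
  have hw1 : ∑ i, w i = 1 := by
    rw [hw, Fin.sum_univ_three]
    simp only [Matrix.cons_val_zero, Matrix.cons_val_one, Matrix.head_cons,
      Matrix.cons_val_two, Matrix.tail_cons]
    field_simp
    linarith [hsumN]
  have hind : AffineIndependent ℝ v := by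
    rw [affineIndependent_iff_not_collinear]
    intro hcol
    have hPxmem : Px ∈ Set.range v := ⟨0, rfl⟩
    obtain ⟨dir, hdir⟩ := (collinear_iff_of_mem hPxmem).mp hcol
    obtain ⟨r1', e1⟩ := hdir Py ⟨1, rfl⟩
    obtain ⟨r2', e2⟩ := hdir Pz ⟨2, rfl⟩
    have e1a : y = r1' * dir.1 + x := congrArg Prod.fst e1
    have e1b : f y = r1' * dir.2 + f x := congrArg Prod.snd e1
    have e2a : z = r2' * dir.1 + x := congrArg Prod.fst e2
    have e2b : f z = r2' * dir.2 + f x := congrArg Prod.snd e2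
    have : (y - x) * (f z - f x) = (f y - f x) * (z - x) := by
      rw [show y - x = r1' * dir.1 by linarith, show f y - f x = r1' * dir.2 by linarith,
        show z - x = r2' * dir.1 by linarith, show f z - f x = r2' * dir.2 by linarith]
      ring
    rw [hTdef] at hT
    linarith
  have htot : affineSpan ℝ (Set.range v) = ⊤ := by
    rw [hind.affineSpan_eq_top_iff_card_eq_finrank_add_one]
    simp [Module.finrank_prod]
  set B : AffineBasis (Fin 3) ℝ (ℝ × ℝ) := ⟨v, hind, htot⟩ with hB
  have hrange : Set.range v = ({Px, Py, Pz} : Set (ℝ × ℝ)) := by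
    ext p
    constructor
    · rintro ⟨i, rfl⟩
      fin_cases i <;> simp [hv]
    · intro hp
      simp only [Set.mem_insert_iff, Set.mem_singleton_iff] at hp
      rcases hp with rfl | rfl | rfl
      exacts [⟨0, rfl⟩, ⟨1, rfl⟩, ⟨2, rfl⟩]
  have hcomb : Pt = Finset.univ.affineCombination ℝ v w := by
    rw [Finset.affineCombination_eq_linear_combination _ _ _ hw1, Fin.sum_univ_three]
    rw [hw, hv, hPt, hPx, hPy, hPz]
    simp only [Matrix.cons_val_zero, Matrix.cons_val_one, Matrix.head_cons,
      Matrix.cons_val_two, Matrix.tail_cons, Prod.smul_mk, smul_eq_mul, Prod.mk_add_mk]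
    have c1 : N0 / T * x + N1 / T * y + N2 / T * z = t := by
      field_simp
      rw [hN0def, hN1def, hN2def, hTdef]; ring
    have c2 : N0 / T * f x + N1 / T * f y + N2 / T * f z = f t := by
      field_simp
      rw [hN0def, hN1def, hN2def, hTdef]; ring
    exact Prod.ext c1.symm c2.symm
  have hint : Pt ∈ interior (convexHull ℝ ({Px, Py, Pz} : Set (ℝ × ℝ))) := by
    rw [← hrange]
    have hBr : Set.range v = Set.range (B : Fin 3 → ℝ × ℝ) := rfl
    rw [hBr, B.interior_convexHull, Set.mem_setOf_eq]
    intro i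
    have hco : B.coord i Pt = w i := by
      rw [hcomb]
      exact B.coord_apply_combination_of_mem (Finset.mem_univ i) hw1
    rw [hco]
    fin_cases i
    · simpa [hw] using div_pos hN0 hT
    · simpa [hw] using div_pos hN1 hT
    · simpa [hw] using div_pos hN2 hT
  -- distinctness
  have hne2 : ∀ a b c d : ℝ, a ≠ c → ((a, b) : ℝ × ℝ) ≠ (c, d) := by
    intro a b c d h hh
    exact h (congrArg Prod.fst hh)
  have hxz : x < z := lt_trans hxy hzy
  have htz : t < z := lt_trans hty hzy
  have hcard : ({Px, Py, Pz, Pt} : Set (ℝ × ℝ)).ncard = 4 := by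
    rw [hPx, hPy, hPz, hPt]
    exact ncard_four' (hne2 _ _ _ _ hxy.ne) (hne2 _ _ _ _ hxz.ne) (hne2 _ _ _ _ hxt.ne)
      (hne2 _ _ _ _ hzy.ne) (hne2 _ _ _ _ hty.ne') (hne2 _ _ _ _ htz.ne')
  -- diameter
  have hIcc : ∀ p ∈ ({Px, Py, Pz, Pt} : Set (ℝ × ℝ)),
      p.1 ∈ Set.Icc x z ∧ p.2 ∈ Set.Icc (f x) (f z) := by
    intro p hp
    simp only [Set.mem_insert_iff, Set.mem_singleton_iff] at hp
    rcases hp with rfl | rfl | rfl | rfl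
    · rw [hPx]; refine ⟨⟨?_, ?_⟩, ?_, ?_⟩ <;> simp <;> linarith
    · rw [hPy]; refine ⟨⟨?_, ?_⟩, ?_, ?_⟩ <;> simp <;> linarith
    · rw [hPz]; refine ⟨⟨?_, ?_⟩, ?_, ?_⟩ <;> simp <;> linarith
    · rw [hPt]; refine ⟨⟨?_, ?_⟩, ?_, ?_⟩ <;> simp <;> linarith
  have hzxη : z - x ≤ η := by
    have h1 := min_le_right r1 (η/2)
    linarith
  have hfzxη : f z - f x ≤ η := by linarith
  have hdiam : EMetric.diam ({Px, Py, Pz, Pt} : Set (ℝ × ℝ)) ≤ δ := by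
    refine le_trans (EMetric.diam_le ?_) hηδ
    intro p hp q hq
    rw [edist_le_ofReal hη.le]
    rw [Prod.dist_eq]
    obtain ⟨hp1, hp2⟩ := hIcc p hp
    obtain ⟨hq1, hq2⟩ := hIcc q hq
    apply max_le
    · exact le_trans (Real.dist_le_of_mem_Icc hp1 hq1) hzxη
    · exact le_trans (Real.dist_le_of_mem_Icc hp2 hq2) hfzxη
  -- contradiction
  exact hns Px (hmemA x hxE) Py (hmemA y hyE) Pz (hmemA z hzE) Pt (hmemA t htE)
    hcard hdiam hint
end

section
/- Let φ : ℝ → ℝ be continuous and strictly increasing, K ⊆ ℝ compact, and suppose for every x ∈ K and M > 0 there is ε > 0 such that φ(b) - φ(a) ≥ M(b - a) whenever x - ε < a ≤ b < x + ε. Let ψ be an antiderivative of φ (ψ' = φ). Then for every x ∈ K, lim_{t→0} [(ψ(x + t) - ψ(x))/t - φ(x)]/t = +∞. -/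
/-! Fix `c > 0` and the matching `ε`. The function `g(s) = ψ(s) - (s - x) φ(x) - c (s - x)² / 2`
has derivative `φ(s) - φ(x) - c (s - x)`, which steepness makes `≥ 0` right of `x` and `≤ 0` left
of it within `ε`, so `g` has a minimum at `x`. Hence `ψ(x + t) - ψ(x) - t φ(x) ≥ c t² / 2` for
`|t| < ε`, and the quotient in question is exactly this left side divided by `t²`. -/

open Filter Set

theorem le_of_hasDerivAt_nonpos_left_nonneg_right {g g' : ℝ → ℝ} {x ε : ℝ}
    (hg : ∀ y, HasDerivAt g (g' y) y)
    (hleft : ∀ y, x - ε < y → y ≤ x → g' y ≤ 0)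
    (hright : ∀ y, x ≤ y → y < x + ε → 0 ≤ g' y) {y : ℝ} (hy : |y - x| < ε) :
    g x ≤ g y := by
  have hcont : Continuous g := continuous_iff_continuousAt.2 fun y => (hg y).continuousAt
  obtain ⟨hyl, hyr⟩ := abs_sub_lt_iff.1 hy
  rcases le_total x y with hxy | hyx
  · refine monotoneOn_of_hasDerivWithinAt_nonneg (convex_Icc x y) hcont.continuousOn
      (fun z _ => (hg z).hasDerivWithinAt) (fun z hz => ?_)
      (left_mem_Icc.2 hxy) (right_mem_Icc.2 hxy) hxy
    rw [interior_Icc] at hz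
    exact hright z hz.1.le (by linarith [hz.2])
  · refine antitoneOn_of_hasDerivWithinAt_nonpos (convex_Icc y x) hcont.continuousOn
      (fun z _ => (hg z).hasDerivWithinAt) (fun z hz => ?_)
      (left_mem_Icc.2 hyx) (right_mem_Icc.2 hyx) hyx
    rw [interior_Icc] at hz
    exact hleft z (by linarith [hz.1]) hz.2.le

theorem quadratic_le_sub_sub_of_steep {φ ψ : ℝ → ℝ} (hψ : ∀ y, HasDerivAt ψ (φ y) y)
    {x c ε : ℝ} (hsteep : ∀ a b : ℝ, x - ε < a → a ≤ b → b < x + ε → c * (b - a) ≤ φ b - φ a)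
    {t : ℝ} (ht : |t| < ε) :
    c / 2 * t ^ 2 ≤ ψ (x + t) - ψ x - t * φ x := by
  have hg : ∀ y, HasDerivAt (fun s => ψ s - (s - x) * φ x - c / 2 * (s - x) ^ 2)
      (φ y - φ x - c * (y - x)) y := by
    intro y
    refine (((hψ y).sub (((hasDerivAt_id' y).sub_const x).mul_const (φ x))).sub
      ((((hasDerivAt_id' y).sub_const x).pow 2).const_mul (c / 2))).congr_deriv ?_
    push_cast
    ring
  have hmin := le_of_hasDerivAt_nonpos_left_nonneg_right hg
    (fun y hy hyx => by linarith [hsteep y x hy hyx (by linarith [abs_lt.1 ht])])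
    (fun y hxy hy => by linarith [hsteep x y (by linarith [abs_lt.1 ht]) hxy hy])
    (y := x + t) (by simpa using ht)
  linarith

theorem tendsto_slope_sub_div_atTop_of_steep {φ ψ : ℝ → ℝ} (hψ : ∀ y, HasDerivAt ψ (φ y) y)
    {x : ℝ} (hsteep : ∀ M > (0 : ℝ), ∃ ε > (0 : ℝ), ∀ a b : ℝ,
      x - ε < a → a ≤ b → b < x + ε → M * (b - a) ≤ φ b - φ a) :
    Tendsto (fun t : ℝ => ((ψ (x + t) - ψ x) / t - φ x) / t) (nhdsWithin 0 {0}ᶜ) atTop := by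
  refine tendsto_atTop.2 fun M => ?_
  obtain ⟨ε, hε, hsteepc⟩ := hsteep (2 * max M 1) (by positivity)
  have hsmall : ∀ᶠ t in nhdsWithin (0 : ℝ) {0}ᶜ, |t| < ε :=
    nhdsWithin_le_nhds (by simpa only [Metric.ball, Real.dist_eq, sub_zero]
      using Metric.ball_mem_nhds (0 : ℝ) hε)
  filter_upwards [hsmall, self_mem_nhdsWithin] with t ht ht0
  have ht0 : t ≠ 0 := ht0
  have hquot : ((ψ (x + t) - ψ x) / t - φ x) / t = (ψ (x + t) - ψ x - t * φ x) / t ^ 2 := by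
    field_simp
  rw [hquot, le_div_iff₀ (by positivity)]
  calc M * t ^ 2 ≤ 2 * max M 1 / 2 * t ^ 2 := by gcongr; linarith [le_max_left M 1]
    _ ≤ _ := quadratic_le_sub_sub_of_steep hψ hsteepc ht

theorem stmt_15_general (φ ψ : ℝ → ℝ)
    (K : Set ℝ)
    (hsteep : ∀ x ∈ K, ∀ M > (0:ℝ), ∃ ε > (0:ℝ), ∀ a b : ℝ,
      x - ε < a → a ≤ b → b < x + ε → M * (b - a) ≤ φ b - φ a)
    (hψ : ∀ x : ℝ, HasDerivAt ψ (φ x) x) :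
    ∀ x ∈ K, Filter.Tendsto (fun t : ℝ => ((ψ (x + t) - ψ x) / t - φ x) / t)
      (nhdsWithin 0 {0}ᶜ) Filter.atTop :=
  fun x hx => tendsto_slope_sub_div_atTop_of_steep hψ (hsteep x hx)

theorem stmt_15 (φ ψ : ℝ → ℝ) (hφc : Continuous φ) (hφmono : StrictMono φ)
    (K : Set ℝ) (hK : IsCompact K)
    (hsteep : ∀ x ∈ K, ∀ M > (0:ℝ), ∃ ε > (0:ℝ), ∀ a b : ℝ,
      x - ε < a → a ≤ b → b < x + ε → M * (b - a) ≤ φ b - φ a)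
    (hψ : ∀ x : ℝ, HasDerivAt ψ (φ x) x) :
    ∀ x ∈ K, Filter.Tendsto (fun t : ℝ => ((ψ (x + t) - ψ x) / t - φ x) / t)
      (nhdsWithin 0 {0}ᶜ) Filter.atTop :=
  stmt_15_general φ ψ K hsteep hψ
end
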